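/- arXiv:2307.05001 — 4 statements merged into one kernel-verified Lean document; each statement's English description precedes it below -/
import Mathlib

section
/- Let A be a 4-form on the SU(3) model space ℝ^6 (with standard forms F, Ψ⁺) such that for every vector X the contraction 3-form X ⌟ A lies in the module Λ³₁₂ = {γ ∈ Λ³ : γ∧F = γ∧Ψ⁺ = γ∧Ψ⁻ = 0}. Then A = 0. -/
open scoped BigOperators
/-- Antisymmetrized indicator of the ordered triple `(a,b,c)`: the components of the
basic 3-form `e_a ∧ e_b ∧ e_c`. -/
def tri (a b c i j k : Fin 6) : ℝ :=
  (if (i, j, k) = (a, b, c) then (1:ℝ) else 0) - (if (i, j, k) = (a, c, b) then 1 else 0)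
  + (if (i, j, k) = (b, c, a) then 1 else 0) - (if (i, j, k) = (b, a, c) then 1 else 0)
  + (if (i, j, k) = (c, a, b) then 1 else 0) - (if (i, j, k) = (c, b, a) then 1 else 0)

/-- Components of the fundamental 2-form `F = -e12 - e34 - e56` on ℝ⁶ (0-indexed). -/
def Fc : Fin 6 → Fin 6 → ℝ := fun i j =>
  !![0,-1,0,0,0,0; 1,0,0,0,0,0; 0,0,0,-1,0,0; 0,0,1,0,0,0; 0,0,0,0,0,-1; 0,0,0,0,1,0] i j

/-- Components of `Ψ⁺ = -e135 + e236 + e146 + e245` (0-indexed). -/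
def Psip (i j k : Fin 6) : ℝ :=
  -tri 0 2 4 i j k + tri 1 2 5 i j k + tri 0 3 5 i j k + tri 1 3 4 i j k

/-- Components of `Ψ⁻ = -e136 - e145 - e235 + e246` (0-indexed). -/
def Psim (i j k : Fin 6) : ℝ :=
  -tri 0 2 5 i j k - tri 0 3 4 i j k - tri 1 2 4 i j k + tri 1 3 5 i j k

/-- Components of the 4-form `Φ = (1/2) F ∧ F`:
`Φ_{jslm} = F_{js} F_{lm} + F_{sl} F_{jm} + F_{lj} F_{sm}`. -/
def Phi (i j k l : Fin 6) : ℝ := Fc i j * Fc k l + Fc j k * Fc i l + Fc k i * Fc j l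

/-- Kronecker delta on `Fin 6`. -/
def kron (i j : Fin 6) : ℝ := if i = j then 1 else 0

/-- The (un-normalized) value of the 5-form `γ ∧ β` (γ a 3-form, β a 2-form on ℝ⁶,
given by their components) on the basis vectors `v 0, …, v 4`. -/
def wedge32 (γ : Fin 6 → Fin 6 → Fin 6 → ℝ) (β : Fin 6 → Fin 6 → ℝ) (v : Fin 5 → Fin 6) : ℝ :=
  ∑ σ : Equiv.Perm (Fin 5),
    ((Equiv.Perm.sign σ : ℤ) : ℝ) * γ (v (σ 0)) (v (σ 1)) (v (σ 2)) * β (v (σ 3)) (v (σ 4))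

/-- The (un-normalized) value of the 6-form `γ ∧ ψ` (γ, ψ 3-forms on ℝ⁶, given by their
components) on the standard basis `e₁, …, e₆`. -/
def wedge33 (γ ψ : Fin 6 → Fin 6 → Fin 6 → ℝ) : ℝ :=
  ∑ σ : Equiv.Perm (Fin 6),
    ((Equiv.Perm.sign σ : ℤ) : ℝ) * γ (σ 0) (σ 1) (σ 2) * ψ (σ 3) (σ 4) (σ 5)

theorem permSum {n : ℕ} (f : Equiv.Perm (Fin (n+1)) → ℝ) :
    ∑ σ : Equiv.Perm (Fin (n+1)), f σ
      = ∑ p : Fin (n+1), ∑ τ : Equiv.Perm (Fin n), f (Equiv.Perm.decomposeFin.symm (p, τ)) := by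
  rw [← (Equiv.Perm.decomposeFin (n := n)).symm.sum_comp f, Fintype.sum_prod_type]

theorem permSum1 (f : Equiv.Perm (Fin 1) → ℝ) : ∑ σ : Equiv.Perm (Fin 1), f σ = f 1 :=
  Fintype.sum_unique f

set_option maxHeartbeats 4000000 in
theorem w32v (γ : Fin 6 → Fin 6 → Fin 6 → ℝ) (β : Fin 6 → Fin 6 → ℝ) (v : Fin 5 → Fin 6) :
    wedge32 γ β v = 0 + γ (v 0) (v 1) (v 2) * β (v 3) (v 4) - γ (v 0) (v 1) (v 2) * β (v 4) (v 3) - γ (v 0) (v 1) (v 3) * β (v 2) (v 4) + γ (v 0) (v 1) (v 3) * β (v 4) (v 2) + γ (v 0) (v 1) (v 4) * β (v 2) (v 3) - γ (v 0) (v 1) (v 4) * β (v 3) (v 2) - γ (v 0) (v 2) (v 1) * β (v 3) (v 4) + γ (v 0) (v 2) (v 1) * β (v 4) (v 3) + γ (v 0) (v 2) (v 3) * β (v 1) (v 4) - γ (v 0) (v 2) (v 3) * β (v 4) (v 1) - γ (v 0) (v 2) (v 4) * β (v 1) (v 3) + γ (v 0) (v 2) (v 4) * β (v 3) (v 1) +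 γ (v 0) (v 3) (v 1) * β (v 2) (v 4) - γ (v 0) (v 3) (v 1) * β (v 4) (v 2) - γ (v 0) (v 3) (v 2) * β (v 1) (v 4) + γ (v 0) (v 3) (v 2) * β (v 4) (v 1) + γ (v 0) (v 3) (v 4) * β (v 1) (v 2) - γ (v 0) (v 3) (v 4) * β (v 2) (v 1) - γ (v 0) (v 4) (v 1) * β (v 2) (v 3) + γ (v 0) (v 4) (v 1) * β (v 3) (v 2) + γ (v 0) (v 4) (v 2) * β (v 1) (v 3) - γ (v 0) (v 4) (v 2) * β (v 3) (v 1) - γ (v 0) (v 4) (v 3) * β (v 1) (v 2) + γ (v 0) (v 4) (v 3) * β (v 2) (v 1) - γ (v 1) (v 0) (v 2) * β (v 3) (v 4) + γ (v 1) (v 0) (v 2) * β (v 4) (v 3) + γ (v 1) (v 0) (v 3) * β (v 2) (v 4) - γ (v 1) (v 0) (v 3) * β (v 4) (v 2) - γ (v 1) (v 0) (v 4) * β (v 2) (v 3) + γ (v 1) (v 0) (v 4) * β (v 3) (v 2) + γ (v 1) (v 2) (v 0) * β (v 3) (v 4) - γ (v 1) (v 2) (v 0) * β (v 4) (v 3)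 - γ (v 1) (v 2) (v 3) * β (v 0) (v 4) + γ (v 1) (v 2) (v 3) * β (v 4) (v 0) + γ (v 1) (v 2) (v 4) * β (v 0) (v 3) - γ (v 1) (v 2) (v 4) * β (v 3) (v 0) - γ (v 1) (v 3) (v 0) * β (v 2) (v 4) + γ (v 1) (v 3) (v 0) * β (v 4) (v 2) + γ (v 1) (v 3) (v 2) * β (v 0) (v 4) - γ (v 1) (v 3) (v 2) * β (v 4) (v 0) - γ (v 1) (v 3) (v 4) * β (v 0) (v 2) + γ (v 1) (v 3) (v 4) * β (v 2) (v 0) + γ (v 1) (v 4) (v 0) * β (v 2) (v 3) - γ (v 1) (v 4) (v 0) * β (v 3) (v 2) - γ (v 1) (v 4) (v 2) * β (v 0) (v 3) + γ (v 1) (v 4) (v 2) * β (v 3) (v 0) + γ (v 1) (v 4) (v 3) * β (v 0) (v 2) - γ (v 1) (v 4) (v 3) * β (v 2) (v 0) + γ (v 2) (v 0) (v 1) * β (v 3) (v 4) - γ (v 2) (v 0) (v 1) * β (v 4) (v 3) - γ (v 2) (v 0) (v 3) * β (v 1) (v 4) + γ (v 2) (v 0) (v 3) * β (v 4) (v 1)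 + γ (v 2) (v 0) (v 4) * β (v 1) (v 3) - γ (v 2) (v 0) (v 4) * β (v 3) (v 1) - γ (v 2) (v 1) (v 0) * β (v 3) (v 4) + γ (v 2) (v 1) (v 0) * β (v 4) (v 3) + γ (v 2) (v 1) (v 3) * β (v 0) (v 4) - γ (v 2) (v 1) (v 3) * β (v 4) (v 0) - γ (v 2) (v 1) (v 4) * β (v 0) (v 3) + γ (v 2) (v 1) (v 4) * β (v 3) (v 0) + γ (v 2) (v 3) (v 0) * β (v 1) (v 4) - γ (v 2) (v 3) (v 0) * β (v 4) (v 1) - γ (v 2) (v 3) (v 1) * β (v 0) (v 4) + γ (v 2) (v 3) (v 1) * β (v 4) (v 0) + γ (v 2) (v 3) (v 4) * β (v 0) (v 1) - γ (v 2) (v 3) (v 4) * β (v 1) (v 0) - γ (v 2) (v 4) (v 0) * β (v 1) (v 3) + γ (v 2) (v 4) (v 0) * β (v 3) (v 1) + γ (v 2) (v 4) (v 1) * β (v 0) (v 3) - γ (v 2) (v 4) (v 1) * β (v 3) (v 0) - γ (v 2) (v 4) (v 3) * β (v 0) (v 1) + γ (v 2) (v 4) (v 3) * β (v 1) (v 0)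 - γ (v 3) (v 0) (v 1) * β (v 2) (v 4) + γ (v 3) (v 0) (v 1) * β (v 4) (v 2) + γ (v 3) (v 0) (v 2) * β (v 1) (v 4) - γ (v 3) (v 0) (v 2) * β (v 4) (v 1) - γ (v 3) (v 0) (v 4) * β (v 1) (v 2) + γ (v 3) (v 0) (v 4) * β (v 2) (v 1) + γ (v 3) (v 1) (v 0) * β (v 2) (v 4) - γ (v 3) (v 1) (v 0) * β (v 4) (v 2) - γ (v 3) (v 1) (v 2) * β (v 0) (v 4) + γ (v 3) (v 1) (v 2) * β (v 4) (v 0) + γ (v 3) (v 1) (v 4) * β (v 0) (v 2) - γ (v 3) (v 1) (v 4) * β (v 2) (v 0) - γ (v 3) (v 2) (v 0) * β (v 1) (v 4) + γ (v 3) (v 2) (v 0) * β (v 4) (v 1) + γ (v 3) (v 2) (v 1) * β (v 0) (v 4) - γ (v 3) (v 2) (v 1) * β (v 4) (v 0) - γ (v 3) (v 2) (v 4) * β (v 0) (v 1) + γ (v 3) (v 2) (v 4) * β (v 1) (v 0) + γ (v 3) (v 4) (v 0) * β (v 1) (v 2) - γ (v 3) (v 4) (v 0) * β (v 2) (v 1)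 - γ (v 3) (v 4) (v 1) * β (v 0) (v 2) + γ (v 3) (v 4) (v 1) * β (v 2) (v 0) + γ (v 3) (v 4) (v 2) * β (v 0) (v 1) - γ (v 3) (v 4) (v 2) * β (v 1) (v 0) + γ (v 4) (v 0) (v 1) * β (v 2) (v 3) - γ (v 4) (v 0) (v 1) * β (v 3) (v 2) - γ (v 4) (v 0) (v 2) * β (v 1) (v 3) + γ (v 4) (v 0) (v 2) * β (v 3) (v 1) + γ (v 4) (v 0) (v 3) * β (v 1) (v 2) - γ (v 4) (v 0) (v 3) * β (v 2) (v 1) - γ (v 4) (v 1) (v 0) * β (v 2) (v 3) + γ (v 4) (v 1) (v 0) * β (v 3) (v 2) + γ (v 4) (v 1) (v 2) * β (v 0) (v 3) - γ (v 4) (v 1) (v 2) * β (v 3) (v 0) - γ (v 4) (v 1) (v 3) * β (v 0) (v 2) + γ (v 4) (v 1) (v 3) * β (v 2) (v 0) + γ (v 4) (v 2) (v 0) * β (v 1) (v 3) - γ (v 4) (v 2) (v 0) * β (v 3) (v 1) - γ (v 4) (v 2) (v 1) * β (v 0) (v 3) + γ (v 4) (v 2) (v 1) * β (v 3) (v 0)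 + γ (v 4) (v 2) (v 3) * β (v 0) (v 1) - γ (v 4) (v 2) (v 3) * β (v 1) (v 0) - γ (v 4) (v 3) (v 0) * β (v 1) (v 2) + γ (v 4) (v 3) (v 0) * β (v 2) (v 1) + γ (v 4) (v 3) (v 1) * β (v 0) (v 2) - γ (v 4) (v 3) (v 1) * β (v 2) (v 0) - γ (v 4) (v 3) (v 2) * β (v 0) (v 1) + γ (v 4) (v 3) (v 2) * β (v 1) (v 0) := by
  rw [wedge32]
  simp only [permSum, permSum1, Fin.sum_univ_succ, Fin.sum_univ_zero,
    Equiv.Perm.decomposeFin_symm_apply_zero, Equiv.Perm.decomposeFin_symm_apply_one,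
    show (2 : Fin 5) = Fin.succ 1 from rfl, show (3 : Fin 5) = Fin.succ 2 from rfl,
    show (4 : Fin 5) = Fin.succ 3 from rfl,
    show (2 : Fin 4) = Fin.succ 1 from rfl, show (3 : Fin 4) = Fin.succ 2 from rfl,
    show (2 : Fin 3) = Fin.succ 1 from rfl,
    Equiv.Perm.decomposeFin_symm_apply_succ,
    Equiv.Perm.decomposeFin.symm_sign, Equiv.Perm.sign_one,
    Equiv.swap_apply_def, Equiv.Perm.one_apply]
  norm_num [Fin.ext_iff]
  ring

set_option maxHeartbeats 4000000 in
set_option maxRecDepth 40000 in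
theorem w32 (γ : Fin 6 → Fin 6 → Fin 6 → ℝ) (β : Fin 6 → Fin 6 → ℝ) (a b c d e : Fin 6) :
    wedge32 γ β ![a,b,c,d,e] = 0 + γ a b c * β d e - γ a b c * β e d - γ a b d * β c e + γ a b d * β e c + γ a b e * β c d - γ a b e * β d c - γ a c b * β d e + γ a c b * β e d + γ a c d * β b e - γ a c d * β e b - γ a c e * β b d + γ a c e * β d b + γ a d b * β c e - γ a d b * β e c - γ a d c * β b e + γ a d c * β e b + γ a d e * β b c - γ a d e * β c b - γ a e b * β c d + γ a e b * β d c + γ a e c * β b d - γ a e c * β d b - γ a e d * β b c + γ a e d * β c b - γ b a c * β d e + γ b a c * β e d + γ b a d * β c e - γ b a d * β e c - γ b a e * β c d + γ b a e * β d c + γ b c a * β d e - γ b c a * β e d - γ b c d * β a e + γ b c d * β e a + γ b c e * β a d - γ b c e * β d a - γ b d a * β c e + γ b d a * β e c + γ b d c * β a e - γ b d c * β e a - γ b d e * β a c + γ b d e * β c a + γ b e a * β c d - γ b e a * β d c - γ b e c * β a d + γ b e c * β d a + γ b e d * β a c - γ b e d * β c a + γ c a b * β d e - γ c a b * β e d -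 γ c a d * β b e + γ c a d * β e b + γ c a e * β b d - γ c a e * β d b - γ c b a * β d e + γ c b a * β e d + γ c b d * β a e - γ c b d * β e a - γ c b e * β a d + γ c b e * β d a + γ c d a * β b e - γ c d a * β e b - γ c d b * β a e + γ c d b * β e a + γ c d e * β a b - γ c d e * β b a - γ c e a * β b d + γ c e a * β d b + γ c e b * β a d - γ c e b * β d a - γ c e d * β a b + γ c e d * β b a - γ d a b * β c e + γ d a b * β e c + γ d a c * β b e - γ d a c * β e b - γ d a e * β b c + γ d a e * β c b + γ d b a * β c e - γ d b a * β e c - γ d b c * β a e + γ d b c * β e a + γ d b e * β a c - γ d b e * β c a - γ d c a * β b e + γ d c a * β e b + γ d c b * β a e - γ d c b * β e a - γ d c e * β a b + γ d c e * β b a + γ d e a * β b c - γ d e a * β c b - γ d e b * β a c + γ d e b * β c a + γ d e c * β a b - γ d e c * β b a + γ e a b * β c d - γ e a b * β d c - γ e a c * β b d + γ e a c * β d b + γ e a d * β b c - γ e a d * β c b - γ e b a * β c d + γ e b a * β d c + γ e b c * β a d - γ e b c * β d a - γ e b d * β a c + γ e b d * β c a + γ e c a * β b d - γ e c a * β d b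 - γ e c b * β a d + γ e c b * β d a + γ e c d * β a b - γ e c d * β b a - γ e d a * β b c + γ e d a * β c b + γ e d b * β a c - γ e d b * β c a - γ e d c * β a b + γ e d c * β b a := by
  rw [w32v]; rfl
set_option maxHeartbeats 10000000 in
/-- Proposition 4.1: if every vector contraction `X ⌟ A` of a 4-form `A`
lies in `Λ³₁₂ = {γ : γ∧F = γ∧Ψ⁺ = γ∧Ψ⁻ = 0}`, then `A = 0`. -/
theorem fourform_contractions_in_Lambda312_vanish
    (A : Fin 6 → Fin 6 → Fin 6 → Fin 6 → ℝ)
    (hA1 : ∀ i j k l, A i j k l = - A j i k l)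
    (hA2 : ∀ i j k l, A i j k l = - A i k j l)
    (hA3 : ∀ i j k l, A i j k l = - A i j l k)
    (hF : ∀ (X : Fin 6 → ℝ) (v : Fin 5 → Fin 6),
      wedge32 (fun j k l => ∑ p : Fin 6, X p * A p j k l) Fc v = 0)
    (hP : ∀ X : Fin 6 → ℝ, wedge33 (fun j k l => ∑ p : Fin 6, X p * A p j k l) Psip = 0)
    (hM : ∀ X : Fin 6 → ℝ, wedge33 (fun j k l => ∑ p : Fin 6, X p * A p j k l) Psim = 0) :
    ∀ i j k l, A i j k l = 0 := by
  have key : ∀ q : Fin 6, ∀ v : Fin 5 → Fin 6, wedge32 (fun j k l => A q j k l) Fc v = 0 := by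
    intro q v
    have h := hF (fun p => if p = q then 1 else 0) v
    simpa only [wedge32, ite_mul, one_mul, zero_mul, Finset.sum_ite_eq', Finset.mem_univ,
      if_true] using h
  have n1 : ∀ p x y z, A p y x z = -A p x y z := fun p x y z => hA2 p y x z
  have n2 : ∀ p x y z, A p x z y = -A p x y z := fun p x y z => hA3 p x z y
  have n3 : ∀ p x y z, A p y z x = A p x y z := by
    intro p x y z; rw [hA3 p y z x, hA2 p y x z]; ring
  have n4 : ∀ p x y z, A p z x y = A p x y z := by
    intro p x y z; rw [hA2 p z x y, hA3 p x z y]; ring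
  have n5 : ∀ p x y z, A p z y x = -A p x y z := by
    intro p x y z; rw [hA2 p z y x, n3 p x y z]
  have r1 : ∀ p y z, A p p y z = 0 := by intro p y z; have := hA1 p p y z; linarith
  have r2 : ∀ p y z, A p y p z = 0 := by intro p y z; rw [n1 p p y z, r1 p y z, neg_zero]
  have r3 : ∀ p y z, A p y z p = 0 := by intro p y z; rw [n3 p p y z, r1 p y z]
  have m : ∀ q a b c, A a b q c = A q a b c := by
    intro q a b c; rw [hA2 a b q c, hA1 a q b c]; ring
  have z0234 : A 0 2 3 4 = 0 := by
    have e := key 0 ![0,1,2,3,4]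
    rw [w32] at e
    simp only [show Fc 0 0 = 0 from rfl, show Fc 0 1 = (-1) from rfl, show Fc 0 2 = 0 from rfl, show Fc 0 3 = 0 from rfl, show Fc 0 4 = 0 from rfl, show Fc 0 5 = 0 from rfl, show Fc 1 0 = 1 from rfl, show Fc 1 1 = 0 from rfl, show Fc 1 2 = 0 from rfl, show Fc 1 3 = 0 from rfl, show Fc 1 4 = 0 from rfl, show Fc 1 5 = 0 from rfl, show Fc 2 0 = 0 from rfl, show Fc 2 1 = 0 from rfl, show Fc 2 2 = 0 from rfl, show Fc 2 3 = (-1) from rfl, show Fc 2 4 = 0 from rfl, show Fc 2 5 = 0 from rfl, show Fc 3 0 = 0 from rfl, show Fc 3 1 = 0 from rfl, show Fc 3 2 = 1 from rfl, show Fc 3 3 = 0 from rfl, show Fc 3 4 = 0 from rfl, show Fc 3 5 = 0 from rfl, show Fc 4 0 = 0 from rfl, show Fc 4 1 = 0 from rfl, show Fc 4 2 = 0 from rfl, show Fc 4 3 = 0 from rfl, show Fc 4 4 = 0 from rfl, show Fc 4 5 = (-1) from rfl, show Fc 5 0 = 0 from rfl, show Fc 5 1 = 0 from rfl, show Fc 5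 2 = 0 from rfl, show Fc 5 3 = 0 from rfl, show Fc 5 4 = 1 from rfl, show Fc 5 5 = 0 from rfl, n1 0 1 2 3, n2 0 1 2 3, n3 0 1 2 3, n4 0 1 2 3, n5 0 1 2 3, n1 0 1 2 4, n2 0 1 2 4, n3 0 1 2 4, n4 0 1 2 4, n5 0 1 2 4, n1 0 1 3 4, n2 0 1 3 4, n3 0 1 3 4, n4 0 1 3 4, n5 0 1 3 4, n1 0 2 3 4, n2 0 2 3 4, n3 0 2 3 4, n4 0 2 3 4, n5 0 2 3 4, r1 0 1 2, r1 0 1 3, r1 0 1 4, r1 0 2 1, r1 0 2 3, r1 0 2 4, r1 0 3 1, r1 0 3 2, r1 0 3 4, r1 0 4 1, r1 0 4 2, r1 0 4 3, r2 0 1 2, r2 0 1 3, r2 0 1 4, r3 0 1 2, r3 0 1 3, r3 0 1 4, r2 0 2 1, r2 0 2 3, r2 0 2 4, r3 0 2 1, r3 0 2 3, r3 0 2 4, r2 0 3 1, r2 0 3 2, r2 0 3 4, r3 0 3 1, r3 0 3 2, r3 0 3 4, r2 0 4 1, r2 0 4 2, r2 0 4 3, r3 0 4 1, r3 0 4 2,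 r3 0 4 3, mul_zero, mul_one, mul_neg, mul_neg_one, neg_neg, neg_zero, add_zero, zero_add] at e
    linarith
  have z0235 : A 0 2 3 5 = 0 := by
    have e := key 0 ![0,1,2,3,5]
    rw [w32] at e
    simp only [show Fc 0 0 = 0 from rfl, show Fc 0 1 = (-1) from rfl, show Fc 0 2 = 0 from rfl, show Fc 0 3 = 0 from rfl, show Fc 0 4 = 0 from rfl, show Fc 0 5 = 0 from rfl, show Fc 1 0 = 1 from rfl, show Fc 1 1 = 0 from rfl, show Fc 1 2 = 0 from rfl, show Fc 1 3 = 0 from rfl, show Fc 1 4 = 0 from rfl, show Fc 1 5 = 0 from rfl, show Fc 2 0 = 0 from rfl, show Fc 2 1 = 0 from rfl, show Fc 2 2 = 0 from rfl, show Fc 2 3 = (-1) from rfl, show Fc 2 4 = 0 from rfl, show Fc 2 5 = 0 from rfl, show Fc 3 0 = 0 from rfl, show Fc 3 1 = 0 from rfl, show Fc 3 2 = 1 from rfl, show Fc 3 3 = 0 from rfl, show Fc 3 4 = 0 from rfl, show Fc 3 5 = 0 from rfl, show Fc 4 0 = 0 from rfl, show Fc 4 1 = 0 from rfl, show Fc 4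 2 = 0 from rfl, show Fc 4 3 = 0 from rfl, show Fc 4 4 = 0 from rfl, show Fc 4 5 = (-1) from rfl, show Fc 5 0 = 0 from rfl, show Fc 5 1 = 0 from rfl, show Fc 5 2 = 0 from rfl, show Fc 5 3 = 0 from rfl, show Fc 5 4 = 1 from rfl, show Fc 5 5 = 0 from rfl, n1 0 1 2 3, n2 0 1 2 3, n3 0 1 2 3, n4 0 1 2 3, n5 0 1 2 3, n1 0 1 2 5, n2 0 1 2 5, n3 0 1 2 5, n4 0 1 2 5, n5 0 1 2 5, n1 0 1 3 5, n2 0 1 3 5, n3 0 1 3 5, n4 0 1 3 5, n5 0 1 3 5, n1 0 2 3 5, n2 0 2 3 5, n3 0 2 3 5, n4 0 2 3 5, n5 0 2 3 5, r1 0 1 2, r1 0 1 3, r1 0 1 5, r1 0 2 1, r1 0 2 3, r1 0 2 5, r1 0 3 1, r1 0 3 2, r1 0 3 5, r1 0 5 1, r1 0 5 2, r1 0 5 3, r2 0 1 2, r2 0 1 3, r2 0 1 5, r3 0 1 2, r3 0 1 3, r3 0 1 5, r2 0 2 1, r2 0 2 3, r2 0 2 5, r3 0 2 1, r3 0 2 3,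 r3 0 2 5, r2 0 3 1, r2 0 3 2, r2 0 3 5, r3 0 3 1, r3 0 3 2, r3 0 3 5, r2 0 5 1, r2 0 5 2, r2 0 5 3, r3 0 5 1, r3 0 5 2, r3 0 5 3, mul_zero, mul_one, mul_neg, mul_neg_one, neg_neg, neg_zero, add_zero, zero_add] at e
    linarith
  have z0245 : A 0 2 4 5 = 0 := by
    have e := key 0 ![0,1,2,4,5]
    rw [w32] at e
    simp only [show Fc 0 0 = 0 from rfl, show Fc 0 1 = (-1) from rfl, show Fc 0 2 = 0 from rfl, show Fc 0 3 = 0 from rfl, show Fc 0 4 = 0 from rfl, show Fc 0 5 = 0 from rfl, show Fc 1 0 = 1 from rfl, show Fc 1 1 = 0 from rfl, show Fc 1 2 = 0 from rfl, show Fc 1 3 = 0 from rfl, show Fc 1 4 = 0 from rfl, show Fc 1 5 = 0 from rfl, show Fc 2 0 = 0 from rfl, show Fc 2 1 = 0 from rfl, show Fc 2 2 = 0 from rfl, show Fc 2 3 = (-1) from rfl, show Fc 2 4 = 0 from rfl, show Fc 2 5 = 0 from rfl, show Fc 3 0 = 0 from rfl, show Fc 3 1 = 0 from rfl, show Fc 3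 2 = 1 from rfl, show Fc 3 3 = 0 from rfl, show Fc 3 4 = 0 from rfl, show Fc 3 5 = 0 from rfl, show Fc 4 0 = 0 from rfl, show Fc 4 1 = 0 from rfl, show Fc 4 2 = 0 from rfl, show Fc 4 3 = 0 from rfl, show Fc 4 4 = 0 from rfl, show Fc 4 5 = (-1) from rfl, show Fc 5 0 = 0 from rfl, show Fc 5 1 = 0 from rfl, show Fc 5 2 = 0 from rfl, show Fc 5 3 = 0 from rfl, show Fc 5 4 = 1 from rfl, show Fc 5 5 = 0 from rfl, n1 0 1 2 4, n2 0 1 2 4, n3 0 1 2 4, n4 0 1 2 4, n5 0 1 2 4, n1 0 1 2 5, n2 0 1 2 5, n3 0 1 2 5, n4 0 1 2 5, n5 0 1 2 5, n1 0 1 4 5, n2 0 1 4 5, n3 0 1 4 5, n4 0 1 4 5, n5 0 1 4 5, n1 0 2 4 5, n2 0 2 4 5, n3 0 2 4 5, n4 0 2 4 5, n5 0 2 4 5, r1 0 1 2, r1 0 1 4, r1 0 1 5, r1 0 2 1, r1 0 2 4, r1 0 2 5, r1 0 4 1, r1 0 4 2, r1 0 4 5, r1 0 5 1, r1 0 5 2,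 r1 0 5 4, r2 0 1 2, r2 0 1 4, r2 0 1 5, r3 0 1 2, r3 0 1 4, r3 0 1 5, r2 0 2 1, r2 0 2 4, r2 0 2 5, r3 0 2 1, r3 0 2 4, r3 0 2 5, r2 0 4 1, r2 0 4 2, r2 0 4 5, r3 0 4 1, r3 0 4 2, r3 0 4 5, r2 0 5 1, r2 0 5 2, r2 0 5 4, r3 0 5 1, r3 0 5 2, r3 0 5 4, mul_zero, mul_one, mul_neg, mul_neg_one, neg_neg, neg_zero, add_zero, zero_add] at e
    linarith
  have z0345 : A 0 3 4 5 = 0 := by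
    have e := key 0 ![0,1,3,4,5]
    rw [w32] at e
    simp only [show Fc 0 0 = 0 from rfl, show Fc 0 1 = (-1) from rfl, show Fc 0 2 = 0 from rfl, show Fc 0 3 = 0 from rfl, show Fc 0 4 = 0 from rfl, show Fc 0 5 = 0 from rfl, show Fc 1 0 = 1 from rfl, show Fc 1 1 = 0 from rfl, show Fc 1 2 = 0 from rfl, show Fc 1 3 = 0 from rfl, show Fc 1 4 = 0 from rfl, show Fc 1 5 = 0 from rfl, show Fc 2 0 = 0 from rfl, show Fc 2 1 = 0 from rfl, show Fc 2 2 = 0 from rfl, show Fc 2 3 = (-1) from rfl, show Fc 2 4 = 0 from rfl, show Fc 2 5 = 0 from rfl, show Fc 3 0 = 0 from rfl, show Fc 3 1 = 0 from rfl, show Fc 3 2 = 1 from rfl, show Fc 3 3 = 0 from rfl, show Fc 3 4 = 0 from rfl, show Fc 3 5 = 0 from rfl, show Fc 4 0 = 0 from rfl, show Fc 4 1 = 0 from rfl, show Fc 4 2 = 0 from rfl, show Fc 4 3 = 0 from rfl, show Fc 4 4 = 0 from rfl, show Fc 4 5 = (-1) from rfl, show Fc 5 0 = 0 from rfl, show Fc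 5 1 = 0 from rfl, show Fc 5 2 = 0 from rfl, show Fc 5 3 = 0 from rfl, show Fc 5 4 = 1 from rfl, show Fc 5 5 = 0 from rfl, n1 0 1 3 4, n2 0 1 3 4, n3 0 1 3 4, n4 0 1 3 4, n5 0 1 3 4, n1 0 1 3 5, n2 0 1 3 5, n3 0 1 3 5, n4 0 1 3 5, n5 0 1 3 5, n1 0 1 4 5, n2 0 1 4 5, n3 0 1 4 5, n4 0 1 4 5, n5 0 1 4 5, n1 0 3 4 5, n2 0 3 4 5, n3 0 3 4 5, n4 0 3 4 5, n5 0 3 4 5, r1 0 1 3, r1 0 1 4, r1 0 1 5, r1 0 3 1, r1 0 3 4, r1 0 3 5, r1 0 4 1, r1 0 4 3, r1 0 4 5, r1 0 5 1, r1 0 5 3, r1 0 5 4, r2 0 1 3, r2 0 1 4, r2 0 1 5, r3 0 1 3, r3 0 1 4, r3 0 1 5, r2 0 3 1, r2 0 3 4, r2 0 3 5, r3 0 3 1, r3 0 3 4, r3 0 3 5, r2 0 4 1, r2 0 4 3, r2 0 4 5, r3 0 4 1, r3 0 4 3, r3 0 4 5, r2 0 5 1, r2 0 5 3, r2 0 5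 4, r3 0 5 1, r3 0 5 3, r3 0 5 4, mul_zero, mul_one, mul_neg, mul_neg_one, neg_neg, neg_zero, add_zero, zero_add] at e
    linarith
  have z1234 : A 1 2 3 4 = 0 := by
    have e := key 1 ![0,1,2,3,4]
    rw [w32] at e
    simp only [show Fc 0 0 = 0 from rfl, show Fc 0 1 = (-1) from rfl, show Fc 0 2 = 0 from rfl, show Fc 0 3 = 0 from rfl, show Fc 0 4 = 0 from rfl, show Fc 0 5 = 0 from rfl, show Fc 1 0 = 1 from rfl, show Fc 1 1 = 0 from rfl, show Fc 1 2 = 0 from rfl, show Fc 1 3 = 0 from rfl, show Fc 1 4 = 0 from rfl, show Fc 1 5 = 0 from rfl, show Fc 2 0 = 0 from rfl, show Fc 2 1 = 0 from rfl, show Fc 2 2 = 0 from rfl, show Fc 2 3 = (-1) from rfl, show Fc 2 4 = 0 from rfl, show Fc 2 5 = 0 from rfl, show Fc 3 0 = 0 from rfl, show Fc 3 1 = 0 from rfl, show Fc 3 2 = 1 from rfl, show Fc 3 3 = 0 from rfl, show Fc 3 4 = 0 from rfl, show Fc 3 5 = 0 from rfl, show Fc 4 0 = 0 from rfl, show Fc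 4 1 = 0 from rfl, show Fc 4 2 = 0 from rfl, show Fc 4 3 = 0 from rfl, show Fc 4 4 = 0 from rfl, show Fc 4 5 = (-1) from rfl, show Fc 5 0 = 0 from rfl, show Fc 5 1 = 0 from rfl, show Fc 5 2 = 0 from rfl, show Fc 5 3 = 0 from rfl, show Fc 5 4 = 1 from rfl, show Fc 5 5 = 0 from rfl, n1 1 0 2 3, n2 1 0 2 3, n3 1 0 2 3, n4 1 0 2 3, n5 1 0 2 3, n1 1 0 2 4, n2 1 0 2 4, n3 1 0 2 4, n4 1 0 2 4, n5 1 0 2 4, n1 1 0 3 4, n2 1 0 3 4, n3 1 0 3 4, n4 1 0 3 4, n5 1 0 3 4, n1 1 2 3 4, n2 1 2 3 4, n3 1 2 3 4, n4 1 2 3 4, n5 1 2 3 4, r2 1 0 2, r2 1 0 3, r2 1 0 4, r3 1 0 2, r3 1 0 3, r3 1 0 4, r1 1 0 2, r1 1 0 3, r1 1 0 4, r1 1 2 0, r1 1 2 3, r1 1 2 4, r1 1 3 0, r1 1 3 2, r1 1 3 4, r1 1 4 0, r1 1 4 2, r1 1 4 3, r3 1 2 0, r2 1 2 0, r2 1 2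 3, r2 1 2 4, r3 1 2 3, r3 1 2 4, r3 1 3 0, r2 1 3 0, r2 1 3 2, r2 1 3 4, r3 1 3 2, r3 1 3 4, r3 1 4 0, r2 1 4 0, r2 1 4 2, r2 1 4 3, r3 1 4 2, r3 1 4 3, mul_zero, mul_one, mul_neg, mul_neg_one, neg_neg, neg_zero, add_zero, zero_add] at e
    linarith
  have z1235 : A 1 2 3 5 = 0 := by
    have e := key 1 ![0,1,2,3,5]
    rw [w32] at e
    simp only [show Fc 0 0 = 0 from rfl, show Fc 0 1 = (-1) from rfl, show Fc 0 2 = 0 from rfl, show Fc 0 3 = 0 from rfl, show Fc 0 4 = 0 from rfl, show Fc 0 5 = 0 from rfl, show Fc 1 0 = 1 from rfl, show Fc 1 1 = 0 from rfl, show Fc 1 2 = 0 from rfl, show Fc 1 3 = 0 from rfl, show Fc 1 4 = 0 from rfl, show Fc 1 5 = 0 from rfl, show Fc 2 0 = 0 from rfl, show Fc 2 1 = 0 from rfl, show Fc 2 2 = 0 from rfl, show Fc 2 3 = (-1) from rfl, show Fc 2 4 = 0 from rfl, show Fc 2 5 = 0 from rfl, show Fc 3 0 = 0 from rfl, show Fc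 3 1 = 0 from rfl, show Fc 3 2 = 1 from rfl, show Fc 3 3 = 0 from rfl, show Fc 3 4 = 0 from rfl, show Fc 3 5 = 0 from rfl, show Fc 4 0 = 0 from rfl, show Fc 4 1 = 0 from rfl, show Fc 4 2 = 0 from rfl, show Fc 4 3 = 0 from rfl, show Fc 4 4 = 0 from rfl, show Fc 4 5 = (-1) from rfl, show Fc 5 0 = 0 from rfl, show Fc 5 1 = 0 from rfl, show Fc 5 2 = 0 from rfl, show Fc 5 3 = 0 from rfl, show Fc 5 4 = 1 from rfl, show Fc 5 5 = 0 from rfl, n1 1 0 2 3, n2 1 0 2 3, n3 1 0 2 3, n4 1 0 2 3, n5 1 0 2 3, n1 1 0 2 5, n2 1 0 2 5, n3 1 0 2 5, n4 1 0 2 5, n5 1 0 2 5, n1 1 0 3 5, n2 1 0 3 5, n3 1 0 3 5, n4 1 0 3 5, n5 1 0 3 5, n1 1 2 3 5, n2 1 2 3 5, n3 1 2 3 5, n4 1 2 3 5, n5 1 2 3 5, r2 1 0 2, r2 1 0 3, r2 1 0 5, r3 1 0 2, r3 1 0 3, r3 1 0 5, r1 1 0 2, r1 1 0 3, r1 1 0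 5, r1 1 2 0, r1 1 2 3, r1 1 2 5, r1 1 3 0, r1 1 3 2, r1 1 3 5, r1 1 5 0, r1 1 5 2, r1 1 5 3, r3 1 2 0, r2 1 2 0, r2 1 2 3, r2 1 2 5, r3 1 2 3, r3 1 2 5, r3 1 3 0, r2 1 3 0, r2 1 3 2, r2 1 3 5, r3 1 3 2, r3 1 3 5, r3 1 5 0, r2 1 5 0, r2 1 5 2, r2 1 5 3, r3 1 5 2, r3 1 5 3, mul_zero, mul_one, mul_neg, mul_neg_one, neg_neg, neg_zero, add_zero, zero_add] at e
    linarith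
  have z1245 : A 1 2 4 5 = 0 := by
    have e := key 1 ![0,1,2,4,5]
    rw [w32] at e
    simp only [show Fc 0 0 = 0 from rfl, show Fc 0 1 = (-1) from rfl, show Fc 0 2 = 0 from rfl, show Fc 0 3 = 0 from rfl, show Fc 0 4 = 0 from rfl, show Fc 0 5 = 0 from rfl, show Fc 1 0 = 1 from rfl, show Fc 1 1 = 0 from rfl, show Fc 1 2 = 0 from rfl, show Fc 1 3 = 0 from rfl, show Fc 1 4 = 0 from rfl, show Fc 1 5 = 0 from rfl, show Fc 2 0 = 0 from rfl, show Fc 2 1 = 0 from rfl, show Fc 2 2 = 0 from rfl, show Fc 2 3 = (-1) from rfl, show Fc 2 4 = 0 from rfl, show Fc 2 5 = 0 from rfl, show Fc 3 0 = 0 from rfl, show Fc 3 1 = 0 from rfl, show Fc 3 2 = 1 from rfl, show Fc 3 3 = 0 from rfl, show Fc 3 4 = 0 from rfl, show Fc 3 5 = 0 from rfl, show Fc 4 0 = 0 from rfl, show Fc 4 1 = 0 from rfl, show Fc 4 2 = 0 from rfl, show Fc 4 3 = 0 from rfl, show Fc 4 4 = 0 from rfl, show Fc 4 5 = (-1) from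 rfl, show Fc 5 0 = 0 from rfl, show Fc 5 1 = 0 from rfl, show Fc 5 2 = 0 from rfl, show Fc 5 3 = 0 from rfl, show Fc 5 4 = 1 from rfl, show Fc 5 5 = 0 from rfl, n1 1 0 2 4, n2 1 0 2 4, n3 1 0 2 4, n4 1 0 2 4, n5 1 0 2 4, n1 1 0 2 5, n2 1 0 2 5, n3 1 0 2 5, n4 1 0 2 5, n5 1 0 2 5, n1 1 0 4 5, n2 1 0 4 5, n3 1 0 4 5, n4 1 0 4 5, n5 1 0 4 5, n1 1 2 4 5, n2 1 2 4 5, n3 1 2 4 5, n4 1 2 4 5, n5 1 2 4 5, r2 1 0 2, r2 1 0 4, r2 1 0 5, r3 1 0 2, r3 1 0 4, r3 1 0 5, r1 1 0 2, r1 1 0 4, r1 1 0 5, r1 1 2 0, r1 1 2 4, r1 1 2 5, r1 1 4 0, r1 1 4 2, r1 1 4 5, r1 1 5 0, r1 1 5 2, r1 1 5 4, r3 1 2 0, r2 1 2 0, r2 1 2 4, r2 1 2 5, r3 1 2 4, r3 1 2 5, r3 1 4 0, r2 1 4 0, r2 1 4 2, r2 1 4 5, r3 1 4 2, r3 1 4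 5, r3 1 5 0, r2 1 5 0, r2 1 5 2, r2 1 5 4, r3 1 5 2, r3 1 5 4, mul_zero, mul_one, mul_neg, mul_neg_one, neg_neg, neg_zero, add_zero, zero_add] at e
    linarith
  have z1345 : A 1 3 4 5 = 0 := by
    have e := key 1 ![0,1,3,4,5]
    rw [w32] at e
    simp only [show Fc 0 0 = 0 from rfl, show Fc 0 1 = (-1) from rfl, show Fc 0 2 = 0 from rfl, show Fc 0 3 = 0 from rfl, show Fc 0 4 = 0 from rfl, show Fc 0 5 = 0 from rfl, show Fc 1 0 = 1 from rfl, show Fc 1 1 = 0 from rfl, show Fc 1 2 = 0 from rfl, show Fc 1 3 = 0 from rfl, show Fc 1 4 = 0 from rfl, show Fc 1 5 = 0 from rfl, show Fc 2 0 = 0 from rfl, show Fc 2 1 = 0 from rfl, show Fc 2 2 = 0 from rfl, show Fc 2 3 = (-1) from rfl, show Fc 2 4 = 0 from rfl, show Fc 2 5 = 0 from rfl, show Fc 3 0 = 0 from rfl, show Fc 3 1 = 0 from rfl, show Fc 3 2 = 1 from rfl, show Fc 3 3 = 0 from rfl, show Fc 3 4 = 0 from rfl, show Fc 3 5 = 0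 from rfl, show Fc 4 0 = 0 from rfl, show Fc 4 1 = 0 from rfl, show Fc 4 2 = 0 from rfl, show Fc 4 3 = 0 from rfl, show Fc 4 4 = 0 from rfl, show Fc 4 5 = (-1) from rfl, show Fc 5 0 = 0 from rfl, show Fc 5 1 = 0 from rfl, show Fc 5 2 = 0 from rfl, show Fc 5 3 = 0 from rfl, show Fc 5 4 = 1 from rfl, show Fc 5 5 = 0 from rfl, n1 1 0 3 4, n2 1 0 3 4, n3 1 0 3 4, n4 1 0 3 4, n5 1 0 3 4, n1 1 0 3 5, n2 1 0 3 5, n3 1 0 3 5, n4 1 0 3 5, n5 1 0 3 5, n1 1 0 4 5, n2 1 0 4 5, n3 1 0 4 5, n4 1 0 4 5, n5 1 0 4 5, n1 1 3 4 5, n2 1 3 4 5, n3 1 3 4 5, n4 1 3 4 5, n5 1 3 4 5, r2 1 0 3, r2 1 0 4, r2 1 0 5, r3 1 0 3, r3 1 0 4, r3 1 0 5, r1 1 0 3, r1 1 0 4, r1 1 0 5, r1 1 3 0, r1 1 3 4, r1 1 3 5, r1 1 4 0, r1 1 4 3, r1 1 4 5, r1 1 5 0, r1 1 5 3, r1 1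 5 4, r3 1 3 0, r2 1 3 0, r2 1 3 4, r2 1 3 5, r3 1 3 4, r3 1 3 5, r3 1 4 0, r2 1 4 0, r2 1 4 3, r2 1 4 5, r3 1 4 3, r3 1 4 5, r3 1 5 0, r2 1 5 0, r2 1 5 3, r2 1 5 4, r3 1 5 3, r3 1 5 4, mul_zero, mul_one, mul_neg, mul_neg_one, neg_neg, neg_zero, add_zero, zero_add] at e
    linarith
  have z0124 : A 0 1 2 4 = 0 := by
    have e := key 2 ![0,1,2,3,4]
    rw [w32] at e
    simp only [show Fc 0 0 = 0 from rfl, show Fc 0 1 = (-1) from rfl, show Fc 0 2 = 0 from rfl, show Fc 0 3 = 0 from rfl, show Fc 0 4 = 0 from rfl, show Fc 0 5 = 0 from rfl, show Fc 1 0 = 1 from rfl, show Fc 1 1 = 0 from rfl, show Fc 1 2 = 0 from rfl, show Fc 1 3 = 0 from rfl, show Fc 1 4 = 0 from rfl, show Fc 1 5 = 0 from rfl, show Fc 2 0 = 0 from rfl, show Fc 2 1 = 0 from rfl, show Fc 2 2 = 0 from rfl, show Fc 2 3 = (-1) from rfl, show Fc 2 4 = 0 from rfl, show Fc 2 5 =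 0 from rfl, show Fc 3 0 = 0 from rfl, show Fc 3 1 = 0 from rfl, show Fc 3 2 = 1 from rfl, show Fc 3 3 = 0 from rfl, show Fc 3 4 = 0 from rfl, show Fc 3 5 = 0 from rfl, show Fc 4 0 = 0 from rfl, show Fc 4 1 = 0 from rfl, show Fc 4 2 = 0 from rfl, show Fc 4 3 = 0 from rfl, show Fc 4 4 = 0 from rfl, show Fc 4 5 = (-1) from rfl, show Fc 5 0 = 0 from rfl, show Fc 5 1 = 0 from rfl, show Fc 5 2 = 0 from rfl, show Fc 5 3 = 0 from rfl, show Fc 5 4 = 1 from rfl, show Fc 5 5 = 0 from rfl, n1 2 0 1 3, n2 2 0 1 3, n3 2 0 1 3, n4 2 0 1 3, n5 2 0 1 3, n1 2 0 1 4, n2 2 0 1 4, n3 2 0 1 4, n4 2 0 1 4, n5 2 0 1 4, n1 2 0 3 4, n2 2 0 3 4, n3 2 0 3 4, n4 2 0 3 4, n5 2 0 3 4, n1 2 1 3 4, n2 2 1 3 4, n3 2 1 3 4, n4 2 1 3 4, n5 2 1 3 4, r3 2 0 1, r2 2 0 1, r2 2 0 3, r2 2 0 4, r3 2 0 3, r3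 2 0 4, r3 2 1 0, r2 2 1 0, r2 2 1 3, r2 2 1 4, r3 2 1 3, r3 2 1 4, r1 2 0 1, r1 2 0 3, r1 2 0 4, r1 2 1 0, r1 2 1 3, r1 2 1 4, r1 2 3 0, r1 2 3 1, r1 2 3 4, r1 2 4 0, r1 2 4 1, r1 2 4 3, r3 2 3 0, r3 2 3 1, r2 2 3 0, r2 2 3 1, r2 2 3 4, r3 2 3 4, r3 2 4 0, r3 2 4 1, r2 2 4 0, r2 2 4 1, r2 2 4 3, r3 2 4 3, mul_zero, mul_one, mul_neg, mul_neg_one, neg_neg, neg_zero, add_zero, zero_add] at e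
    rw [m 2 0 1 4]; linarith
  have z0125 : A 0 1 2 5 = 0 := by
    have e := key 2 ![0,1,2,3,5]
    rw [w32] at e
    simp only [show Fc 0 0 = 0 from rfl, show Fc 0 1 = (-1) from rfl, show Fc 0 2 = 0 from rfl, show Fc 0 3 = 0 from rfl, show Fc 0 4 = 0 from rfl, show Fc 0 5 = 0 from rfl, show Fc 1 0 = 1 from rfl, show Fc 1 1 = 0 from rfl, show Fc 1 2 = 0 from rfl, show Fc 1 3 = 0 from rfl, show Fc 1 4 = 0 from rfl, show Fc 1 5 = 0 from rfl, show Fc 2 0 = 0 from rfl, show Fc 2 1 = 0 from rfl, show Fc 2 2 = 0 from rfl, show Fc 2 3 = (-1) from rfl, show Fc 2 4 = 0 from rfl, show Fc 2 5 = 0 from rfl, show Fc 3 0 = 0 from rfl, show Fc 3 1 = 0 from rfl, show Fc 3 2 = 1 from rfl, show Fc 3 3 = 0 from rfl, show Fc 3 4 = 0 from rfl, show Fc 3 5 = 0 from rfl, show Fc 4 0 = 0 from rfl, show Fc 4 1 = 0 from rfl, show Fc 4 2 = 0 from rfl, show Fc 4 3 = 0 from rfl, show Fc 4 4 = 0 from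 rfl, show Fc 4 5 = (-1) from rfl, show Fc 5 0 = 0 from rfl, show Fc 5 1 = 0 from rfl, show Fc 5 2 = 0 from rfl, show Fc 5 3 = 0 from rfl, show Fc 5 4 = 1 from rfl, show Fc 5 5 = 0 from rfl, n1 2 0 1 3, n2 2 0 1 3, n3 2 0 1 3, n4 2 0 1 3, n5 2 0 1 3, n1 2 0 1 5, n2 2 0 1 5, n3 2 0 1 5, n4 2 0 1 5, n5 2 0 1 5, n1 2 0 3 5, n2 2 0 3 5, n3 2 0 3 5, n4 2 0 3 5, n5 2 0 3 5, n1 2 1 3 5, n2 2 1 3 5, n3 2 1 3 5, n4 2 1 3 5, n5 2 1 3 5, r3 2 0 1, r2 2 0 1, r2 2 0 3, r2 2 0 5, r3 2 0 3, r3 2 0 5, r3 2 1 0, r2 2 1 0, r2 2 1 3, r2 2 1 5, r3 2 1 3, r3 2 1 5, r1 2 0 1, r1 2 0 3, r1 2 0 5, r1 2 1 0, r1 2 1 3, r1 2 1 5, r1 2 3 0, r1 2 3 1, r1 2 3 5, r1 2 5 0, r1 2 5 1, r1 2 5 3, r3 2 3 0, r3 2 3 1, r2 2 3 0, r2 2 3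 1, r2 2 3 5, r3 2 3 5, r3 2 5 0, r3 2 5 1, r2 2 5 0, r2 2 5 1, r2 2 5 3, r3 2 5 3, mul_zero, mul_one, mul_neg, mul_neg_one, neg_neg, neg_zero, add_zero, zero_add] at e
    rw [m 2 0 1 5]; linarith
  have z0134 : A 0 1 3 4 = 0 := by
    have e := key 3 ![0,1,2,3,4]
    rw [w32] at e
    simp only [show Fc 0 0 = 0 from rfl, show Fc 0 1 = (-1) from rfl, show Fc 0 2 = 0 from rfl, show Fc 0 3 = 0 from rfl, show Fc 0 4 = 0 from rfl, show Fc 0 5 = 0 from rfl, show Fc 1 0 = 1 from rfl, show Fc 1 1 = 0 from rfl, show Fc 1 2 = 0 from rfl, show Fc 1 3 = 0 from rfl, show Fc 1 4 = 0 from rfl, show Fc 1 5 = 0 from rfl, show Fc 2 0 = 0 from rfl, show Fc 2 1 = 0 from rfl, show Fc 2 2 = 0 from rfl, show Fc 2 3 = (-1) from rfl, show Fc 2 4 = 0 from rfl, show Fc 2 5 = 0 from rfl, show Fc 3 0 = 0 from rfl, show Fc 3 1 = 0 from rfl, show Fc 3 2 = 1 from rfl, show Fc 3 3 = 0 from rfl,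 show Fc 3 4 = 0 from rfl, show Fc 3 5 = 0 from rfl, show Fc 4 0 = 0 from rfl, show Fc 4 1 = 0 from rfl, show Fc 4 2 = 0 from rfl, show Fc 4 3 = 0 from rfl, show Fc 4 4 = 0 from rfl, show Fc 4 5 = (-1) from rfl, show Fc 5 0 = 0 from rfl, show Fc 5 1 = 0 from rfl, show Fc 5 2 = 0 from rfl, show Fc 5 3 = 0 from rfl, show Fc 5 4 = 1 from rfl, show Fc 5 5 = 0 from rfl, n1 3 0 1 2, n2 3 0 1 2, n3 3 0 1 2, n4 3 0 1 2, n5 3 0 1 2, n1 3 0 1 4, n2 3 0 1 4, n3 3 0 1 4, n4 3 0 1 4, n5 3 0 1 4, n1 3 0 2 4, n2 3 0 2 4, n3 3 0 2 4, n4 3 0 2 4, n5 3 0 2 4, n1 3 1 2 4, n2 3 1 2 4, n3 3 1 2 4, n4 3 1 2 4, n5 3 1 2 4, r3 3 0 1, r3 3 0 2, r2 3 0 1, r2 3 0 2, r2 3 0 4, r3 3 0 4, r3 3 1 0, r3 3 1 2, r2 3 1 0, r2 3 1 2, r2 3 1 4, r3 3 1 4, r3 3 2 0, r3 3 2 1,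 r2 3 2 0, r2 3 2 1, r2 3 2 4, r3 3 2 4, r1 3 0 1, r1 3 0 2, r1 3 0 4, r1 3 1 0, r1 3 1 2, r1 3 1 4, r1 3 2 0, r1 3 2 1, r1 3 2 4, r1 3 4 0, r1 3 4 1, r1 3 4 2, r3 3 4 0, r3 3 4 1, r3 3 4 2, r2 3 4 0, r2 3 4 1, r2 3 4 2, mul_zero, mul_one, mul_neg, mul_neg_one, neg_neg, neg_zero, add_zero, zero_add] at e
    rw [m 3 0 1 4]; linarith
  have z0135 : A 0 1 3 5 = 0 := by
    have e := key 3 ![0,1,2,3,5]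
    rw [w32] at e
    simp only [show Fc 0 0 = 0 from rfl, show Fc 0 1 = (-1) from rfl, show Fc 0 2 = 0 from rfl, show Fc 0 3 = 0 from rfl, show Fc 0 4 = 0 from rfl, show Fc 0 5 = 0 from rfl, show Fc 1 0 = 1 from rfl, show Fc 1 1 = 0 from rfl, show Fc 1 2 = 0 from rfl, show Fc 1 3 = 0 from rfl, show Fc 1 4 = 0 from rfl, show Fc 1 5 = 0 from rfl, show Fc 2 0 = 0 from rfl, show Fc 2 1 = 0 from rfl, show Fc 2 2 = 0 from rfl, show Fc 2 3 = (-1) from rfl, show Fc 2 4 = 0 from rfl, show Fc 2 5 = 0 from rfl, show Fc 3 0 = 0 from rfl, show Fc 3 1 = 0 from rfl, show Fc 3 2 = 1 from rfl, show Fc 3 3 = 0 from rfl, show Fc 3 4 = 0 from rfl, show Fc 3 5 = 0 from rfl, show Fc 4 0 = 0 from rfl, show Fc 4 1 = 0 from rfl, show Fc 4 2 = 0 from rfl, show Fc 4 3 = 0 from rfl, show Fc 4 4 = 0 from rfl, show Fc 4 5 = (-1) from rfl, show Fc 5 0 = 0 from rfl, show Fc 5 1 = 0 from rfl, show Fc 5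 2 = 0 from rfl, show Fc 5 3 = 0 from rfl, show Fc 5 4 = 1 from rfl, show Fc 5 5 = 0 from rfl, n1 3 0 1 2, n2 3 0 1 2, n3 3 0 1 2, n4 3 0 1 2, n5 3 0 1 2, n1 3 0 1 5, n2 3 0 1 5, n3 3 0 1 5, n4 3 0 1 5, n5 3 0 1 5, n1 3 0 2 5, n2 3 0 2 5, n3 3 0 2 5, n4 3 0 2 5, n5 3 0 2 5, n1 3 1 2 5, n2 3 1 2 5, n3 3 1 2 5, n4 3 1 2 5, n5 3 1 2 5, r3 3 0 1, r3 3 0 2, r2 3 0 1, r2 3 0 2, r2 3 0 5, r3 3 0 5, r3 3 1 0, r3 3 1 2, r2 3 1 0, r2 3 1 2, r2 3 1 5, r3 3 1 5, r3 3 2 0, r3 3 2 1, r2 3 2 0, r2 3 2 1, r2 3 2 5, r3 3 2 5, r1 3 0 1, r1 3 0 2, r1 3 0 5, r1 3 1 0, r1 3 1 2, r1 3 1 5, r1 3 2 0, r1 3 2 1, r1 3 2 5, r1 3 5 0, r1 3 5 1, r1 3 5 2, r3 3 5 0, r3 3 5 1, r3 3 5 2, r2 3 5 0, r2 3 5 1,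 r2 3 5 2, mul_zero, mul_one, mul_neg, mul_neg_one, neg_neg, neg_zero, add_zero, zero_add] at e
    rw [m 3 0 1 5]; linarith
  have ztrio : A 0 1 2 3 = 0 ∧ A 0 1 4 5 = 0 ∧ A 2 3 4 5 = 0 := by
    have e1 := key 0 ![1,2,3,4,5]
    rw [w32] at e1
    simp only [show Fc 0 0 = 0 from rfl, show Fc 0 1 = (-1) from rfl, show Fc 0 2 = 0 from rfl, show Fc 0 3 = 0 from rfl, show Fc 0 4 = 0 from rfl, show Fc 0 5 = 0 from rfl, show Fc 1 0 = 1 from rfl, show Fc 1 1 = 0 from rfl, show Fc 1 2 = 0 from rfl, show Fc 1 3 = 0 from rfl, show Fc 1 4 = 0 from rfl, show Fc 1 5 = 0 from rfl, show Fc 2 0 = 0 from rfl, show Fc 2 1 = 0 from rfl, show Fc 2 2 = 0 from rfl, show Fc 2 3 = (-1) from rfl, show Fc 2 4 = 0 from rfl, show Fc 2 5 = 0 from rfl, show Fc 3 0 = 0 from rfl, show Fc 3 1 = 0 from rfl, show Fc 3 2 = 1 from rfl, show Fc 3 3 = 0 from rfl, show Fc 3 4 = 0 from rfl, show Fc 3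 5 = 0 from rfl, show Fc 4 0 = 0 from rfl, show Fc 4 1 = 0 from rfl, show Fc 4 2 = 0 from rfl, show Fc 4 3 = 0 from rfl, show Fc 4 4 = 0 from rfl, show Fc 4 5 = (-1) from rfl, show Fc 5 0 = 0 from rfl, show Fc 5 1 = 0 from rfl, show Fc 5 2 = 0 from rfl, show Fc 5 3 = 0 from rfl, show Fc 5 4 = 1 from rfl, show Fc 5 5 = 0 from rfl, n1 0 1 2 3, n2 0 1 2 3, n3 0 1 2 3, n4 0 1 2 3, n5 0 1 2 3, n1 0 1 2 4, n2 0 1 2 4, n3 0 1 2 4, n4 0 1 2 4, n5 0 1 2 4, n1 0 1 2 5, n2 0 1 2 5, n3 0 1 2 5, n4 0 1 2 5, n5 0 1 2 5, n1 0 1 3 4, n2 0 1 3 4, n3 0 1 3 4, n4 0 1 3 4, n5 0 1 3 4, n1 0 1 3 5, n2 0 1 3 5, n3 0 1 3 5, n4 0 1 3 5, n5 0 1 3 5, n1 0 1 4 5, n2 0 1 4 5, n3 0 1 4 5, n4 0 1 4 5, n5 0 1 4 5, n1 0 2 3 4, n2 0 2 3 4, n3 0 2 3 4, n4 0 2 3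 4, n5 0 2 3 4, n1 0 2 3 5, n2 0 2 3 5, n3 0 2 3 5, n4 0 2 3 5, n5 0 2 3 5, n1 0 2 4 5, n2 0 2 4 5, n3 0 2 4 5, n4 0 2 4 5, n5 0 2 4 5, n1 0 3 4 5, n2 0 3 4 5, n3 0 3 4 5, n4 0 3 4 5, n5 0 3 4 5, mul_zero, mul_one, mul_neg, mul_neg_one, neg_neg, neg_zero, add_zero, zero_add] at e1
    have e2 := key 2 ![0,1,3,4,5]
    rw [w32] at e2
    simp only [show Fc 0 0 = 0 from rfl, show Fc 0 1 = (-1) from rfl, show Fc 0 2 = 0 from rfl, show Fc 0 3 = 0 from rfl, show Fc 0 4 = 0 from rfl, show Fc 0 5 = 0 from rfl, show Fc 1 0 = 1 from rfl, show Fc 1 1 = 0 from rfl, show Fc 1 2 = 0 from rfl, show Fc 1 3 = 0 from rfl, show Fc 1 4 = 0 from rfl, show Fc 1 5 = 0 from rfl, show Fc 2 0 = 0 from rfl, show Fc 2 1 = 0 from rfl, show Fc 2 2 = 0 from rfl, show Fc 2 3 = (-1) from rfl, show Fc 2 4 = 0 from rfl, show Fc 2 5 = 0 from rfl, show Fc 3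 0 = 0 from rfl, show Fc 3 1 = 0 from rfl, show Fc 3 2 = 1 from rfl, show Fc 3 3 = 0 from rfl, show Fc 3 4 = 0 from rfl, show Fc 3 5 = 0 from rfl, show Fc 4 0 = 0 from rfl, show Fc 4 1 = 0 from rfl, show Fc 4 2 = 0 from rfl, show Fc 4 3 = 0 from rfl, show Fc 4 4 = 0 from rfl, show Fc 4 5 = (-1) from rfl, show Fc 5 0 = 0 from rfl, show Fc 5 1 = 0 from rfl, show Fc 5 2 = 0 from rfl, show Fc 5 3 = 0 from rfl, show Fc 5 4 = 1 from rfl, show Fc 5 5 = 0 from rfl, n1 2 0 1 3, n2 2 0 1 3, n3 2 0 1 3, n4 2 0 1 3, n5 2 0 1 3, n1 2 0 1 4, n2 2 0 1 4, n3 2 0 1 4, n4 2 0 1 4, n5 2 0 1 4, n1 2 0 1 5, n2 2 0 1 5, n3 2 0 1 5, n4 2 0 1 5, n5 2 0 1 5, n1 2 0 3 4, n2 2 0 3 4, n3 2 0 3 4, n4 2 0 3 4, n5 2 0 3 4, n1 2 0 3 5, n2 2 0 3 5, n3 2 0 3 5, n4 2 0 3 5, n5 2 0 3 5, n1 2 0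 4 5, n2 2 0 4 5, n3 2 0 4 5, n4 2 0 4 5, n5 2 0 4 5, n1 2 1 3 4, n2 2 1 3 4, n3 2 1 3 4, n4 2 1 3 4, n5 2 1 3 4, n1 2 1 3 5, n2 2 1 3 5, n3 2 1 3 5, n4 2 1 3 5, n5 2 1 3 5, n1 2 1 4 5, n2 2 1 4 5, n3 2 1 4 5, n4 2 1 4 5, n5 2 1 4 5, n1 2 3 4 5, n2 2 3 4 5, n3 2 3 4 5, n4 2 3 4 5, n5 2 3 4 5, mul_zero, mul_one, mul_neg, mul_neg_one, neg_neg, neg_zero, add_zero, zero_add] at e2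
    have e3 := key 4 ![0,1,2,3,5]
    rw [w32] at e3
    simp only [show Fc 0 0 = 0 from rfl, show Fc 0 1 = (-1) from rfl, show Fc 0 2 = 0 from rfl, show Fc 0 3 = 0 from rfl, show Fc 0 4 = 0 from rfl, show Fc 0 5 = 0 from rfl, show Fc 1 0 = 1 from rfl, show Fc 1 1 = 0 from rfl, show Fc 1 2 = 0 from rfl, show Fc 1 3 = 0 from rfl, show Fc 1 4 = 0 from rfl, show Fc 1 5 = 0 from rfl, show Fc 2 0 = 0 from rfl, show Fc 2 1 = 0 from rfl, show Fc 2 2 = 0 from rfl, show Fc 2 3 = (-1) from rfl, show Fc 2 4 = 0 from rfl, show Fc 2 5 = 0 from rfl, show Fc 3 0 = 0 from rfl, show Fc 3 1 = 0 from rfl, show Fc 3 2 = 1 from rfl, show Fc 3 3 = 0 from rfl, show Fc 3 4 = 0 from rfl, show Fc 3 5 = 0 from rfl, show Fc 4 0 = 0 from rfl, show Fc 4 1 = 0 from rfl, show Fc 4 2 = 0 from rfl, show Fc 4 3 = 0 from rfl, show Fc 4 4 = 0 from rfl, show Fc 4 5 = (-1) from rfl, show Fc 5 0 = 0 from rfl,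 show Fc 5 1 = 0 from rfl, show Fc 5 2 = 0 from rfl, show Fc 5 3 = 0 from rfl, show Fc 5 4 = 1 from rfl, show Fc 5 5 = 0 from rfl, n1 4 0 1 2, n2 4 0 1 2, n3 4 0 1 2, n4 4 0 1 2, n5 4 0 1 2, n1 4 0 1 3, n2 4 0 1 3, n3 4 0 1 3, n4 4 0 1 3, n5 4 0 1 3, n1 4 0 1 5, n2 4 0 1 5, n3 4 0 1 5, n4 4 0 1 5, n5 4 0 1 5, n1 4 0 2 3, n2 4 0 2 3, n3 4 0 2 3, n4 4 0 2 3, n5 4 0 2 3, n1 4 0 2 5, n2 4 0 2 5, n3 4 0 2 5, n4 4 0 2 5, n5 4 0 2 5, n1 4 0 3 5, n2 4 0 3 5, n3 4 0 3 5, n4 4 0 3 5, n5 4 0 3 5, n1 4 1 2 3, n2 4 1 2 3, n3 4 1 2 3, n4 4 1 2 3, n5 4 1 2 3, n1 4 1 2 5, n2 4 1 2 5, n3 4 1 2 5, n4 4 1 2 5, n5 4 1 2 5, n1 4 1 3 5, n2 4 1 3 5, n3 4 1 3 5, n4 4 1 3 5, n5 4 1 3 5, n1 4 2 3 5, n2 4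 2 3 5, n3 4 2 3 5, n4 4 2 3 5, n5 4 2 3 5, mul_zero, mul_one, mul_neg, mul_neg_one, neg_neg, neg_zero, add_zero, zero_add] at e3
    simp only [← m 2 0 1 3] at e2
    simp only [← m 4 0 1 5, ← m 4 2 3 5] at e3
    refine ⟨by linarith, by linarith, by linarith⟩
  obtain ⟨z0123, z0145, z2345⟩ := ztrio
  have hmem : ∀ i j k l : Fin 6, i < j → j < k → k < l →
      (i,j,k,l) ∈ [((0:Fin 6),(1:Fin 6),(2:Fin 6),(3:Fin 6)),(0,1,2,4),(0,1,2,5),(0,1,3,4),(0,1,3,5),(0,1,4,5),(0,2,3,4),(0,2,3,5),(0,2,4,5),(0,3,4,5),(1,2,3,4),(1,2,3,5),(1,2,4,5),(1,3,4,5),(2,3,4,5)] := by decide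
  have P : ∀ i j k l : Fin 6, i ≤ j → j ≤ k → k ≤ l → A i j k l = 0 := by
    intro i j k l h1 h2 h3
    rcases eq_or_lt_of_le h1 with rfl | h1
    · exact r1 i k l
    rcases eq_or_lt_of_le h2 with rfl | h2
    · have := hA2 i j j l; linarith
    rcases eq_or_lt_of_le h3 with rfl | h3
    · have := hA3 i j k k; linarith
    have hm := hmem i j k l h1 h2 h3
    simp only [List.mem_cons, List.not_mem_nil, or_false, Prod.mk.injEq] at hm
    rcases hm with ⟨rfl,rfl,rfl,rfl⟩|⟨rfl,rfl,rfl,rfl⟩|⟨rfl,rfl,rfl,rfl⟩|⟨rfl,rfl,rfl,rfl⟩|⟨rfl,rfl,rfl,rfl⟩|⟨rfl,rfl,rfl,rfl⟩|⟨rfl,rfl,rfl,rfl⟩|⟨rfl,rfl,rfl,rfl⟩|⟨rfl,rfl,rfl,rfl⟩|⟨rfl,rfl,rfl,rfl⟩|⟨rfl,rfl,rfl,rfl⟩|⟨rfl,rfl,rfl,rfl⟩|⟨rfl,rfl,rfl,rfl⟩|⟨rfl,rfl,rfl,rfl⟩|⟨rfl,rfl,rfl,rfl⟩ <;> assumption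
  have t1 : ∀ i j k l, A j i k l = 0 → A i j k l = 0 := by
    intro i j k l h; rw [hA1 i j k l, h, neg_zero]
  have t2 : ∀ i j k l, A i k j l = 0 → A i j k l = 0 := by
    intro i j k l h; rw [hA2 i j k l, h, neg_zero]
  have t3 : ∀ i j k l, A i j l k = 0 → A i j k l = 0 := by
    intro i j k l h; rw [hA3 i j k l, h, neg_zero]
  have Q1 : ∀ i j k l, j ≤ k → k ≤ l → A i j k l = 0 := by
    intro i j k l h2 h3
    rcases le_total i j with h | h
    · exact P i j k l h h2 h3
    · rcases le_total i k with h' | h'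
      · exact t1 i j k l (P j i k l h h' h3)
      · rcases le_total i l with h'' | h''
        · exact t1 i j k l (t2 j i k l (P j k i l h2 h' h''))
        · exact t1 i j k l (t2 j i k l (t3 j k i l (P j k l i h2 h3 h'')))
  have Q2 : ∀ i j k l, k ≤ l → A i j k l = 0 := by
    intro i j k l h3
    rcases le_total j k with h | h
    · exact Q1 i j k l h h3
    · rcases le_total j l with h' | h'
      · exact t2 i j k l (Q1 i k j l h h')
      · exact t2 i j k l (t3 i k j l (Q1 i k l j h3 h'))
  intro i j k l
  rcases le_total k l with h | h
  · exact Q2 i j k l h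
  · exact t3 i j k l (Q2 i j l k h)
end

section
/- Let ∇ be a metric connection with totally skew-symmetric torsion T on a Riemannian manifold (M,g), and ∇^g the Levi-Civita connection. Then ∇^g T = ∇ T + (1/2)σ^T, where σ^T(X,Y,Z,V) = (1/2)∑_j (e_j ⌟ T) ∧ (e_j ⌟ T)(X,Y,Z,V) for an orthonormal frame {e_j}. -/
open scoped BigOperators

/-- An abstract model of a Riemannian manifold with a metric connection:
`C` plays the role of the smooth functions, `V` of the vector fields (a module over `C`),
`D X f` is the derivative of the function `f` along `X`, `lie` the Lie bracket,
`g` the metric, `nab` the metric connection with totally skew-symmetric torsion,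
`nabg` the Levi-Civita connection, and `frame` a (local orthonormal) frame. -/
structure SkewTorsionGeometry (n : ℕ) where
  C : Type
  [ringC : CommRing C]
  [algC : Algebra ℝ C]
  V : Type
  [addV : AddCommGroup V]
  [modV : Module C V]
  D : V → C → C
  lie : V → V → V
  g : V → V → C
  nab : V → V → V
  nabg : V → V → V
  frame : Fin n → V

namespace SkewTorsionGeometry

variable {n : ℕ}

instance (S : SkewTorsionGeometry n) : CommRing S.C := S.ringC
instance (S : SkewTorsionGeometry n) : Algebra ℝ S.C := S.algC
instance (S : SkewTorsionGeometry n) : AddCommGroup S.V := S.addV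
instance (S : SkewTorsionGeometry n) : Module S.C S.V := S.modV

variable (S : SkewTorsionGeometry n)

/-- The torsion 3-form `T(X,Y,Z) = g(∇_X Y - ∇_Y X - [X,Y], Z)`. -/
def Tor (X Y Z : S.V) : S.C := S.g (S.nab X Y - S.nab Y X - S.lie X Y) Z

/-- The curvature `R(X,Y,Z,W) = g([∇_X,∇_Y]Z - ∇_{[X,Y]}Z, W)`. -/
def R (X Y Z W : S.V) : S.C :=
  S.g (S.nab X (S.nab Y Z) - S.nab Y (S.nab X Z) - S.nab (S.lie X Y) Z) W

/-- The covariant derivative `(∇_X T)(Y,Z,W)` of the torsion w.r.t. `∇`. -/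
def nabT (X Y Z W : S.V) : S.C :=
  S.D X (S.Tor Y Z W) - S.Tor (S.nab X Y) Z W - S.Tor Y (S.nab X Z) W - S.Tor Y Z (S.nab X W)

/-- The covariant derivative `(∇^g_X T)(Y,Z,W)` of the torsion w.r.t. the Levi-Civita
connection. -/
def nabgT (X Y Z W : S.V) : S.C :=
  S.D X (S.Tor Y Z W) - S.Tor (S.nabg X Y) Z W - S.Tor Y (S.nabg X Z) W - S.Tor Y Z (S.nabg X W)

/-- The exterior derivative `dT` of the torsion 3-form. -/
def dT (X Y Z W : S.V) : S.C :=
  S.D X (S.Tor Y Z W) - S.D Y (S.Tor X Z W) + S.D Z (S.Tor X Y W) - S.D W (S.Tor X Y Z)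
  - S.Tor (S.lie X Y) Z W + S.Tor (S.lie X Z) Y W - S.Tor (S.lie X W) Y Z
  - S.Tor (S.lie Y Z) X W + S.Tor (S.lie Y W) X Z - S.Tor (S.lie Z W) X Y

/-- The wedge product of two 2-forms, evaluated on `(X,Y,Z,W)`. -/
def wedge22 (α β : S.V → S.V → S.C) (X Y Z W : S.V) : S.C :=
  α X Y * β Z W - α X Z * β Y W + α X W * β Y Z
  + α Y Z * β X W - α Y W * β X Z + α Z W * β X Y

/-- The 4-form `σ^T = (1/2) ∑_j (e_j ⌟ T) ∧ (e_j ⌟ T)`. -/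
noncomputable def sigmaT (X Y Z W : S.V) : S.C :=
  (1/2 : ℝ) • ∑ j : Fin n,
    S.wedge22 (fun A B => S.Tor (S.frame j) A B) (fun A B => S.Tor (S.frame j) A B) X Y Z W

/-- The codifferential `δT(X,Y) = -∑_i (∇^g_{e_i} T)(e_i, X, Y)`. -/
def deltaT (X Y : S.V) : S.C := - ∑ i : Fin n, S.nabgT (S.frame i) (S.frame i) X Y

/-- The covariant derivative `(∇_X δT)(Y,Z)` of the 2-form `δT` w.r.t. `∇`. -/
def nabDeltaT (X Y Z : S.V) : S.C :=
  S.D X (S.deltaT Y Z) - S.deltaT (S.nab X Y) Z - S.deltaT Y (S.nab X Z)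

/-- The axioms of the setting: `g` is a symmetric `C`-bilinear metric, `D` acts by
derivations, `lie` is a Lie bracket, `nab` is a metric connection whose torsion is a
3-form, `nabg` is related to `nab` by `∇^g = ∇ - (1/2)T`, and `frame` is a complete
orthonormal frame. -/
structure IsGood : Prop where
  g_symm : ∀ X Y, S.g X Y = S.g Y X
  g_addl : ∀ X Y Z, S.g (X + Y) Z = S.g X Z + S.g Y Z
  g_smull : ∀ (f : S.C) (X Y), S.g (f • X) Y = f * S.g X Y
  D_add : ∀ X f h, S.D X (f + h) = S.D X f + S.D X h
  D_mul : ∀ X f h, S.D X (f * h) = f * S.D X h + h * S.D X f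
  D_const : ∀ X (r : ℝ), S.D X (algebraMap ℝ S.C r) = 0
  lie_skew : ∀ X Y, S.lie X Y = - S.lie Y X
  jacobi : ∀ X Y Z, S.lie (S.lie X Y) Z + S.lie (S.lie Y Z) X + S.lie (S.lie Z X) Y = 0
  nab_addl : ∀ X Y Z, S.nab (X + Y) Z = S.nab X Z + S.nab Y Z
  nab_smull : ∀ (f : S.C) (X Y), S.nab (f • X) Y = f • S.nab X Y
  nab_addr : ∀ X Y Z, S.nab X (Y + Z) = S.nab X Y + S.nab X Z
  nab_leibniz : ∀ X (f : S.C) Y, S.nab X (f • Y) = f • S.nab X Y + (S.D X f) • Y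
  nab_metric : ∀ X Y Z, S.D X (S.g Y Z) = S.g (S.nab X Y) Z + S.g Y (S.nab X Z)
  torsion_skew : ∀ X Y Z, S.Tor X Y Z = - S.Tor X Z Y
  nabg_rel : ∀ X Y Z, S.g (S.nabg X Y) Z = S.g (S.nab X Y) Z - (1/2 : ℝ) • S.Tor X Y Z
  frame_orth : ∀ i j, S.g (S.frame i) (S.frame j) = if i = j then 1 else 0
  frame_complete : ∀ X : S.V, X = ∑ i : Fin n, S.g X (S.frame i) • S.frame i

end SkewTorsionGeometry

/-!
Since `g(∇^g_X Y, Z) = g(∇_X Y, Z) - ½ T(X,Y,Z)`, replacing `∇` by `∇^g` in one slot of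
`T(∇_X Y, Z, W)` changes it by `-½ g(T_X Y, T_Z W)`, where `T_X Y` is the vector dual to
`T(X,Y,·)`; total skew-symmetry moves every slot into the first one, with the signs of the
three pairings `XY|ZW`, `XZ|YW`, `XW|YZ`. Expanding `g(T_X Y, T_Z W)` in the orthonormal frame
gives `∑_j T(e_j,X,Y) T(e_j,Z,W)`, and the alternating sum over the three pairings is `σ^T`.
-/

namespace SkewTorsionGeometry

variable {n : ℕ}

def torsionVec (S : SkewTorsionGeometry n) (X Y : S.V) : S.V :=
  S.nab X Y - S.nab Y X - S.lie X Y

theorem Tor_eq_g_torsionVec (S : SkewTorsionGeometry n) (X Y Z : S.V) :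
    S.Tor X Y Z = S.g (S.torsionVec X Y) Z := rfl

section

variable {S : SkewTorsionGeometry n} (hS : S.IsGood)
include hS

@[simps]
def gLeft (Z : S.V) : S.V →ₗ[S.C] S.C where
  toFun X := S.g X Z
  map_add' X Y := hS.g_addl X Y Z
  map_smul' f X := hS.g_smull f X Z

theorem Tor_swap_left (X Y Z : S.V) : S.Tor X Y Z = - S.Tor Y X Z := by
  have hvec : S.torsionVec X Y = - S.torsionVec Y X := by
    simp only [torsionVec, hS.lie_skew X Y]
    abel
  simp only [Tor_eq_g_torsionVec, hvec]
  exact map_neg (gLeft hS Z) _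

theorem Tor_rotate (X Y Z : S.V) : S.Tor X Y Z = S.Tor Z X Y := by
  rw [hS.torsion_skew, Tor_swap_left hS, neg_neg]

theorem g_eq_sum_frame (A B : S.V) :
    S.g A B = ∑ j : Fin n, S.g A (S.frame j) * S.g B (S.frame j) := by
  conv_lhs => rw [hS.g_symm, hS.frame_complete B]
  rw [← gLeft_apply hS, map_sum]
  refine Finset.sum_congr rfl fun j _ => ?_
  rw [map_smul, gLeft_apply, hS.g_symm (S.frame j) A, smul_eq_mul, mul_comm]

theorem g_torsionVec_eq_sum (X Y Z W : S.V) :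
    S.g (S.torsionVec X Y) (S.torsionVec Z W)
      = ∑ j : Fin n, S.Tor (S.frame j) X Y * S.Tor (S.frame j) Z W := by
  rw [g_eq_sum_frame hS]
  refine Finset.sum_congr rfl fun j _ => ?_
  rw [← Tor_eq_g_torsionVec, ← Tor_eq_g_torsionVec, Tor_rotate hS X, Tor_rotate hS Z]

theorem Tor_nabg_left (X Y Z W : S.V) :
    S.Tor (S.nabg X Y) Z W
      = S.Tor (S.nab X Y) Z W - (1/2 : ℝ) • S.g (S.torsionVec X Y) (S.torsionVec Z W) := by
  calc S.Tor (S.nabg X Y) Z W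
      = S.g (S.nabg X Y) (S.torsionVec Z W) := by
        rw [← Tor_rotate hS, Tor_eq_g_torsionVec, hS.g_symm]
    _ = S.g (S.nab X Y) (S.torsionVec Z W) - (1/2 : ℝ) • S.Tor X Y (S.torsionVec Z W) :=
        hS.nabg_rel _ _ _
    _ = S.Tor (S.nab X Y) Z W - (1/2 : ℝ) • S.g (S.torsionVec X Y) (S.torsionVec Z W) := by
        rw [← Tor_rotate hS Z W, Tor_eq_g_torsionVec S Z W, hS.g_symm, Tor_eq_g_torsionVec]

theorem Tor_nabg_middle (X Y Z W : S.V) :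
    S.Tor Y (S.nabg X Z) W
      = S.Tor Y (S.nab X Z) W + (1/2 : ℝ) • S.g (S.torsionVec X Z) (S.torsionVec Y W) := by
  rw [Tor_swap_left hS Y, Tor_nabg_left hS, Tor_swap_left hS Y]
  abel

theorem Tor_nabg_right (X Y Z W : S.V) :
    S.Tor Y Z (S.nabg X W)
      = S.Tor Y Z (S.nab X W) - (1/2 : ℝ) • S.g (S.torsionVec X W) (S.torsionVec Y Z) := by
  rw [Tor_rotate hS Y Z, Tor_nabg_left hS, Tor_rotate hS Y Z]

theorem sigmaT_eq_g_torsionVec (X Y Z W : S.V) :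
    S.sigmaT X Y Z W
      = S.g (S.torsionVec X Y) (S.torsionVec Z W) - S.g (S.torsionVec X Z) (S.torsionVec Y W)
          + S.g (S.torsionVec X W) (S.torsionVec Y Z) := by
  simp only [g_torsionVec_eq_sum hS, sigmaT, wedge22, ← Finset.sum_sub_distrib,
    ← Finset.sum_add_distrib, Finset.smul_sum]
  refine Finset.sum_congr rfl fun j _ => ?_
  have half : algebraMap ℝ S.C (1/2) * 2 = 1 := by
    rw [← map_ofNat (algebraMap ℝ S.C) 2, ← map_mul]
    norm_num
  set T := S.Tor (S.frame j)
  rw [Algebra.smul_def]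
  linear_combination (T X Y * T Z W - T X Z * T Y W + T X W * T Y Z) * half

end

end SkewTorsionGeometry

/-- `∇^g T = ∇T + (1/2)σ^T`. -/
theorem nablagT_eq_nablaT_add_half_sigmaT {n : ℕ} (S : SkewTorsionGeometry n)
    (hS : S.IsGood) (X Y Z W : S.V) :
    S.nabgT X Y Z W = S.nabT X Y Z W + (1/2 : ℝ) • S.sigmaT X Y Z W := by
  rw [SkewTorsionGeometry.nabgT, SkewTorsionGeometry.nabT,
    SkewTorsionGeometry.Tor_nabg_left hS, SkewTorsionGeometry.Tor_nabg_middle hS,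
    SkewTorsionGeometry.Tor_nabg_right hS, SkewTorsionGeometry.sigmaT_eq_g_torsionVec hS]
  module
end

section
/- Let ∇ be a metric connection with torsion 3-form T. Then the following are equivalent: (i) (∇_X T)(Y,Z,V) = -(∇_Y T)(X,Z,V) for all X,Y,Z,V (i.e. ∇T is a 4-form); (ii) the curvature of ∇ satisfies the pair-symmetry R(X,Y,Z,V) = R(Z,V,X,Y). -/
open scoped BigOperators

namespace SkewTorsionGeometry

variable {n : ℕ}

/-- The torsion vector `τ(X,Y) = ∇_X Y - ∇_Y X - [X,Y]`. -/
def tv (S : SkewTorsionGeometry n) (X Y : S.V) : S.V :=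
  S.nab X Y - S.nab Y X - S.lie X Y

lemma tor_tv (S : SkewTorsionGeometry n) (X Y Z : S.V) :
    S.Tor X Y Z = S.g (S.tv X Y) Z := rfl

variable (S : SkewTorsionGeometry n)

lemma g_addr (hS : S.IsGood) (X Y Z : S.V) : S.g X (Y + Z) = S.g X Y + S.g X Z := by
  rw [hS.g_symm, hS.g_addl, hS.g_symm Y X, hS.g_symm Z X]

lemma g_smulr (hS : S.IsGood) (f : S.C) (X Y : S.V) : S.g X (f • Y) = f * S.g X Y := by
  rw [hS.g_symm, hS.g_smull, hS.g_symm Y X]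

lemma g_zerol (hS : S.IsGood) (Z : S.V) : S.g 0 Z = 0 := by
  have h := hS.g_addl 0 0 Z
  simp only [add_zero] at h
  linear_combination -h

lemma g_zeror (hS : S.IsGood) (Z : S.V) : S.g Z 0 = 0 := by rw [hS.g_symm, g_zerol S hS]

lemma g_negl (hS : S.IsGood) (X Z : S.V) : S.g (-X) Z = - S.g X Z := by
  have h := hS.g_addl X (-X) Z
  simp only [add_neg_cancel, g_zerol S hS] at h
  linear_combination -h

lemma g_negr (hS : S.IsGood) (X Z : S.V) : S.g Z (-X) = - S.g Z X := by
  rw [hS.g_symm, g_negl S hS, hS.g_symm X Z]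

lemma g_subl (hS : S.IsGood) (X Y Z : S.V) : S.g (X - Y) Z = S.g X Z - S.g Y Z := by
  rw [sub_eq_add_neg, hS.g_addl, g_negl S hS, sub_eq_add_neg]

lemma g_subr (hS : S.IsGood) (X Y Z : S.V) : S.g X (Y - Z) = S.g X Y - S.g X Z := by
  rw [hS.g_symm, g_subl S hS, hS.g_symm Y X, hS.g_symm Z X]

lemma g_nondeg (hS : S.IsGood) {U : S.V} (h : ∀ W, S.g U W = 0) : U = 0 := by
  calc U = ∑ i : Fin n, S.g U (S.frame i) • S.frame i := hS.frame_complete U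
  _ = 0 := by simp [h]

lemma D_zero (hS : S.IsGood) (X : S.V) : S.D X 0 = 0 := by
  have h := hS.D_const X 0
  simpa using h

lemma D_neg (hS : S.IsGood) (X : S.V) (f : S.C) : S.D X (-f) = - S.D X f := by
  have h := hS.D_add X f (-f)
  simp only [add_neg_cancel, D_zero S hS] at h
  linear_combination -h

lemma D_sub (hS : S.IsGood) (X : S.V) (f h' : S.C) : S.D X (f - h') = S.D X f - S.D X h' := by
  rw [sub_eq_add_neg, hS.D_add, D_neg S hS, sub_eq_add_neg]

lemma nab_zeror (hS : S.IsGood) (X : S.V) : S.nab X 0 = 0 := by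
  have h := hS.nab_addr X 0 0
  simp only [add_zero] at h
  have h2 : S.nab X 0 + 0 = S.nab X 0 + S.nab X 0 := by rw [add_zero]; exact h
  exact (add_left_cancel h2).symm

lemma nab_negr (hS : S.IsGood) (X Y : S.V) : S.nab X (-Y) = - S.nab X Y := by
  have h := hS.nab_addr X Y (-Y)
  simp only [add_neg_cancel, nab_zeror S hS] at h
  exact eq_neg_of_add_eq_zero_right h.symm

lemma nab_subr (hS : S.IsGood) (X Y Z : S.V) : S.nab X (Y - Z) = S.nab X Y - S.nab X Z := by
  rw [sub_eq_add_neg, hS.nab_addr, nab_negr S hS, sub_eq_add_neg]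

lemma nab_zerol (hS : S.IsGood) (X : S.V) : S.nab 0 X = 0 := by
  have h := hS.nab_addl 0 0 X
  simp only [add_zero] at h
  have h2 : S.nab 0 X + 0 = S.nab 0 X + S.nab 0 X := by rw [add_zero]; exact h
  exact (add_left_cancel h2).symm

lemma nab_negl (hS : S.IsGood) (X Y : S.V) : S.nab (-X) Y = - S.nab X Y := by
  have h := hS.nab_addl X (-X) Y
  simp only [add_neg_cancel, nab_zerol S hS] at h
  exact eq_neg_of_add_eq_zero_right h.symm

end SkewTorsionGeometry
namespace SkewTorsionGeometry

variable {n : ℕ} (S : SkewTorsionGeometry n)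

lemma tv_skew (hS : S.IsGood) (X Y : S.V) : S.tv X Y = - S.tv Y X := by
  unfold tv
  rw [hS.lie_skew X Y]
  abel

lemma tor_swap12 (hS : S.IsGood) (X Y Z : S.V) : S.Tor X Y Z = - S.Tor Y X Z := by
  rw [tor_tv, tor_tv, tv_skew S hS, g_negl S hS]

lemma tor_rot (hS : S.IsGood) (X Y Z : S.V) : S.Tor X Y Z = S.Tor Y Z X := by
  rw [tor_swap12 S hS, hS.torsion_skew, neg_neg]

lemma gtv_rot (hS : S.IsGood) (X Y Z : S.V) :
    S.g (S.tv X Y) Z = S.g (S.tv Y Z) X := by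
  rw [← tor_tv, ← tor_tv, tor_rot S hS]

lemma gtv_rot2 (hS : S.IsGood) (X Y Z : S.V) :
    S.g (S.tv X Y) Z = S.g (S.tv Z X) Y := by
  rw [gtv_rot S hS, gtv_rot S hS]

lemma gtv_expand_r (hS : S.IsGood) (W B C : S.V) :
    S.g W (S.tv B C) = S.g W (S.nab B C) - S.g W (S.nab C B) - S.g W (S.lie B C) := by
  unfold tv
  rw [g_subr S hS, g_subr S hS]

lemma tor_smul2 (hS : S.IsGood) (f : S.C) (X Y Z : S.V) :
    S.Tor X (f • Y) Z = f * S.Tor X Y Z := by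
  rw [tor_rot S hS, tor_rot S hS X Y Z, tor_rot S hS, tor_rot S hS Y Z X, tor_tv, tor_tv,
    g_smulr S hS]

lemma tor_add2 (hS : S.IsGood) (X A B Z : S.V) :
    S.Tor X (A + B) Z = S.Tor X A Z + S.Tor X B Z := by
  rw [tor_rot S hS, tor_rot S hS X A Z, tor_rot S hS X B Z, tor_rot S hS,
    tor_rot S hS A Z X, tor_rot S hS B Z X, tor_tv, tor_tv, tor_tv, g_addr S hS]

lemma lie_g (hS : S.IsGood) (X Y Z : S.V) :
    S.g (S.lie X Y) Z = S.g (S.nab X Y) Z - S.g (S.nab Y X) Z - S.Tor X Y Z := by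
  rw [tor_tv]
  unfold tv
  rw [g_subl S hS, g_subl S hS]
  ring

lemma lie_addr (hS : S.IsGood) (X A B : S.V) :
    S.lie X (A + B) = S.lie X A + S.lie X B := by
  have h : S.lie X (A + B) - (S.lie X A + S.lie X B) = 0 := by
    apply g_nondeg S hS
    intro W
    rw [g_subl S hS, hS.g_addl, lie_g S hS, lie_g S hS, lie_g S hS,
        hS.nab_addr, hS.nab_addl, hS.g_addl, hS.g_addl, tor_add2 S hS]
    ring
  exact sub_eq_zero.mp h

lemma lie_smulr (hS : S.IsGood) (X : S.V) (f : S.C) (Y : S.V) :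
    S.lie X (f • Y) = f • S.lie X Y + (S.D X f) • Y := by
  have h : S.lie X (f • Y) - (f • S.lie X Y + (S.D X f) • Y) = 0 := by
    apply g_nondeg S hS
    intro W
    rw [g_subl S hS, hS.g_addl, hS.g_smull f (S.lie X Y) W, hS.g_smull (S.D X f) Y W,
        lie_g S hS, lie_g S hS, hS.nab_leibniz, hS.nab_smull, hS.g_addl,
        hS.g_smull f (S.nab X Y) W, hS.g_smull (S.D X f) Y W,
        hS.g_smull f (S.nab Y X) W, tor_smul2 S hS]
    ring
  exact sub_eq_zero.mp h

lemma lie_zeror (hS : S.IsGood) (X : S.V) : S.lie X 0 = 0 := by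
  have h := lie_addr S hS X 0 0
  simp only [add_zero] at h
  have h2 : S.lie X 0 + 0 = S.lie X 0 + S.lie X 0 := by rw [add_zero]; exact h
  exact (add_left_cancel h2).symm

lemma lie_negr (hS : S.IsGood) (X Y : S.V) : S.lie X (-Y) = - S.lie X Y := by
  have h := lie_addr S hS X Y (-Y)
  simp only [add_neg_cancel, lie_zeror S hS] at h
  exact eq_neg_of_add_eq_zero_right h.symm

lemma lie_subr (hS : S.IsGood) (X A B : S.V) :
    S.lie X (A - B) = S.lie X A - S.lie X B := by
  rw [sub_eq_add_neg, lie_addr S hS, lie_negr S hS, sub_eq_add_neg]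

lemma lie_addl (hS : S.IsGood) (A B X : S.V) :
    S.lie (A + B) X = S.lie A X + S.lie B X := by
  rw [hS.lie_skew, lie_addr S hS, hS.lie_skew A X, hS.lie_skew B X]
  abel

lemma lie_subl (hS : S.IsGood) (A B X : S.V) :
    S.lie (A - B) X = S.lie A X - S.lie B X := by
  rw [hS.lie_skew, lie_subr S hS, hS.lie_skew A X, hS.lie_skew B X]
  abel

lemma lie_smull (hS : S.IsGood) (f : S.C) (Y X : S.V) :
    S.lie (f • Y) X = f • S.lie Y X - (S.D X f) • Y := by
  rw [hS.lie_skew, lie_smulr S hS, hS.lie_skew Y X]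
  module

lemma anchor_smul (hS : S.IsGood) (X Y : S.V) (f : S.C) (Z : S.V) :
    (S.D X (S.D Y f) - S.D Y (S.D X f) - S.D (S.lie X Y) f) • Z = 0 := by
  have h0 := hS.jacobi X Y (f • Z)
  rw [lie_smulr S hS Y f Z, lie_smull S hS f Z X,
      lie_smulr S hS (S.lie X Y) f Z,
      lie_addl S hS, lie_subl S hS,
      lie_smull S hS f (S.lie Y Z) X, lie_smull S hS (S.D Y f) Z X,
      lie_smull S hS f (S.lie Z X) Y, lie_smull S hS (S.D X f) Z Y] at h0
  linear_combination (norm := module) f • hS.jacobi X Y Z - h0 - (S.D X f) • hS.lie_skew Z Y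

end SkewTorsionGeometry
namespace SkewTorsionGeometry

variable {n : ℕ} (S : SkewTorsionGeometry n)

lemma anchor (hS : S.IsGood) (i : Fin n) (X Y : S.V) (f : S.C) :
    S.D X (S.D Y f) - S.D Y (S.D X f) = S.D (S.lie X Y) f := by
  have h := anchor_smul S hS X Y f (S.frame i)
  have h2 := congrArg (fun U => S.g U (S.frame i)) h
  simp only [hS.g_smull, hS.frame_orth, eq_self_iff_true, if_true, mul_one, g_zerol S hS] at h2
  linear_combination h2

lemma R_swap12 (hS : S.IsGood) (X Y Z W : S.V) : S.R Y X Z W = - S.R X Y Z W := by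
  have hv : S.nab (S.lie Y X) Z = - S.nab (S.lie X Y) Z := by
    rw [hS.lie_skew Y X, nab_negl S hS]
  unfold R
  rw [hv]
  rw [g_subl S hS, g_subl S hS, g_subl S hS, g_subl S hS, g_negl S hS]
  ring

lemma R_swap34 (hS : S.IsGood) (i : Fin n) (X Y Z W : S.V) :
    S.R X Y W Z = - S.R X Y Z W := by
  have A := anchor S hS i X Y (S.g Z W)
  rw [hS.nab_metric Y Z W, hS.nab_metric X Z W, hS.D_add, hS.D_add,
      hS.nab_metric X (S.nab Y Z) W, hS.nab_metric X Z (S.nab Y W),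
      hS.nab_metric Y (S.nab X Z) W, hS.nab_metric Y Z (S.nab X W),
      hS.nab_metric (S.lie X Y) Z W] at A
  unfold R
  rw [g_subl S hS, g_subl S hS, g_subl S hS, g_subl S hS]
  linear_combination A - hS.g_symm Z (S.nab X (S.nab Y W)) + hS.g_symm Z (S.nab Y (S.nab X W))
    + hS.g_symm Z (S.nab (S.lie X Y) W)

lemma nabT_swap34 (hS : S.IsGood) (X Y Z W : S.V) :
    S.nabT X Y Z W = - S.nabT X Y W Z := by
  unfold nabT
  have hD : S.D X (S.Tor Y Z W) = - S.D X (S.Tor Y W Z) := by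
    rw [hS.torsion_skew Y Z W, D_neg S hS]
  linear_combination hD - hS.torsion_skew (S.nab X Y) Z W - hS.torsion_skew Y Z (S.nab X W)
    - hS.torsion_skew Y (S.nab X Z) W

lemma nabT_swap23 (hS : S.IsGood) (X Y Z W : S.V) :
    S.nabT X Y Z W = - S.nabT X Z Y W := by
  unfold nabT
  have hD : S.D X (S.Tor Y Z W) = - S.D X (S.Tor Z Y W) := by
    rw [tor_swap12 S hS Y Z W, D_neg S hS]
  linear_combination hD - tor_swap12 S hS (S.nab X Y) Z W - tor_swap12 S hS Y (S.nab X Z) W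
    - tor_swap12 S hS Y Z (S.nab X W)

end SkewTorsionGeometry
namespace SkewTorsionGeometry

variable {n : ℕ} (S : SkewTorsionGeometry n)

lemma nabT_eq2 (hS : S.IsGood) (X Y Z V : S.V) :
    S.nabT X Y Z V = S.g (S.nab X (S.tv Y Z)) V - S.g (S.tv Z V) (S.nab X Y)
      + S.g (S.tv Y V) (S.nab X Z) := by
  unfold nabT
  simp only [tor_tv]
  have e1 := hS.nab_metric X (S.tv Y Z) V
  have r1 := gtv_rot S hS (S.nab X Y) Z V
  have r2 : S.g (S.tv Y (S.nab X Z)) V = - S.g (S.tv Y V) (S.nab X Z) := by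
    rw [tv_skew S hS Y (S.nab X Z), g_negl S hS, gtv_rot S hS]
  linear_combination e1 - r1 - r2

lemma vB (hS : S.IsGood) (X Y Z : S.V) :
    (S.nab X (S.nab Y Z) - S.nab Y (S.nab X Z) - S.nab (S.lie X Y) Z)
    + (S.nab Y (S.nab Z X) - S.nab Z (S.nab Y X) - S.nab (S.lie Y Z) X)
    + (S.nab Z (S.nab X Y) - S.nab X (S.nab Z Y) - S.nab (S.lie Z X) Y)
    = (S.nab X (S.tv Y Z) - S.tv (S.lie X Y) Z)
    + (S.nab Y (S.tv Z X) - S.tv (S.lie Y Z) X)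
    + (S.nab Z (S.tv X Y) - S.tv (S.lie Z X) Y) := by
  simp only [tv]
  simp only [nab_subr S hS]
  linear_combination (norm := module) - hS.jacobi X Y Z

lemma bianchi (hS : S.IsGood) (X Y Z V : S.V) :
    S.R X Y Z V + S.R Y Z X V + S.R Z X Y V
      = S.nabT X Y Z V + S.nabT Y Z X V + S.nabT Z X Y V
        + S.g (S.tv Z V) (S.tv X Y) + S.g (S.tv X V) (S.tv Y Z)
        + S.g (S.tv Y V) (S.tv Z X) := by
  have hv := congrArg (fun U => S.g U V) (vB S hS X Y Z)
  simp only [hS.g_addl, g_subl S hS] at hv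
  rw [nabT_eq2 S hS X Y Z V, nabT_eq2 S hS Y Z X V, nabT_eq2 S hS Z X Y V]
  unfold R
  simp only [g_subl S hS]
  have q1 := gtv_expand_r S hS (S.tv Z V) X Y
  have q2 := gtv_expand_r S hS (S.tv X V) Y Z
  have q3 := gtv_expand_r S hS (S.tv Y V) Z X
  have r1 := gtv_rot S hS (S.lie X Y) Z V
  have r2 := gtv_rot S hS (S.lie Y Z) X V
  have r3 := gtv_rot S hS (S.lie Z X) Y V
  linear_combination hv - q1 - q2 - q3 - r1 - r2 - r3

end SkewTorsionGeometry
namespace SkewTorsionGeometry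

variable {n : ℕ} (S : SkewTorsionGeometry n)

lemma half_cancel {a : S.C} (h : a + a = 0) : a = 0 := by
  have h2 : ((2:ℝ)) • a = 0 := by rw [two_smul]; exact h
  calc a = ((1/2 : ℝ) * 2) • a := by norm_num
  _ = (1/2:ℝ) • ((2:ℝ) • a) := by rw [smul_smul]
  _ = (1/2:ℝ) • (0 : S.C) := by rw [h2]
  _ = 0 := smul_zero _

lemma master (hS : S.IsGood) (i : Fin n) (X Y Z V : S.V) :
    (S.R X Y Z V - S.R Z V X Y) + (S.R X Y Z V - S.R Z V X Y)
      = S.nabT X Y Z V - S.nabT Y X Z V - S.nabT Z X Y V + S.nabT V X Y Z := by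
  have b1 := bianchi S hS X Y Z V
  have b2 := bianchi S hS Y Z V X
  have b3 := bianchi S hS Z V X Y
  have b4 := bianchi S hS V X Y Z
  -- canonicalizations for b1
  have hn1 := nabT_swap23 S hS Y Z X V
  -- canonicalizations for b2
  have hr1 := R_swap34 S hS i Y Z X V
  have hr2 := R_swap34 S hS i Z V X Y
  have hr3 := R_swap12 S hS Y V Z X
  have hn2 : S.nabT Y Z V X = S.nabT Y X Z V := by
    rw [nabT_swap34 S hS Y Z V X, nabT_swap23 S hS Y Z X V, neg_neg]
  have hn3 : S.nabT Z V Y X = - S.nabT Z X Y V := by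
    rw [nabT_swap23 S hS Z V Y X, nabT_swap34 S hS Z Y V X, nabT_swap23 S hS Z Y X V]
    ring
  have hn4 : S.nabT V Y Z X = S.nabT V X Y Z := by
    rw [nabT_swap34 S hS V Y Z X, nabT_swap23 S hS V Y X Z, neg_neg]
  have hq1 : S.g (S.tv V X) (S.tv Y Z) = - S.g (S.tv X V) (S.tv Y Z) := by
    rw [tv_skew S hS V X, g_negl S hS]
  have hq2 : S.g (S.tv Y X) (S.tv Z V) = - S.g (S.tv Z V) (S.tv X Y) := by
    rw [tv_skew S hS Y X, g_negl S hS, hS.g_symm]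
  have hq3 : S.g (S.tv Z X) (S.tv V Y) = - S.g (S.tv Y V) (S.tv Z X) := by
    rw [tv_skew S hS V Y, g_negr S hS, hS.g_symm]
  -- canonicalizations for b3
  have hr4 : S.R V X Z Y = S.R X V Y Z := by
    rw [R_swap12 S hS X V Z Y, R_swap34 S hS i X V Y Z, neg_neg]
  have hr5 : S.R X Z V Y = S.R Z X Y V := by
    rw [R_swap12 S hS Z X V Y, R_swap34 S hS i Z X Y V, neg_neg]
  have hn5 : S.nabT Z V X Y = S.nabT Z X Y V := by
    rw [nabT_swap23 S hS Z V X Y, nabT_swap34 S hS Z X V Y, neg_neg]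
  have hn6 := nabT_swap34 S hS V X Z Y
  have hn7 : S.nabT X Z V Y = S.nabT X Y Z V := by
    rw [nabT_swap23 S hS X Z V Y, nabT_swap34 S hS X V Z Y, nabT_swap23 S hS X V Y Z,
      nabT_swap34 S hS X Y V Z]
    ring
  have hq4 := hS.g_symm (S.tv X Y) (S.tv Z V)
  have hq5 : S.g (S.tv Z Y) (S.tv V X) = S.g (S.tv X V) (S.tv Y Z) := by
    rw [tv_skew S hS Z Y, tv_skew S hS V X, g_negl S hS, g_negr S hS, neg_neg, hS.g_symm]
  have hq6 : S.g (S.tv V Y) (S.tv X Z) = S.g (S.tv Y V) (S.tv Z X) := by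
    rw [tv_skew S hS V Y, tv_skew S hS X Z, g_negl S hS, g_negr S hS, neg_neg, hS.g_symm]
  -- canonicalizations for b4
  have hr6 := R_swap12 S hS X V Y Z
  have hr7 := R_swap34 S hS i X Y Z V
  have hr8 := R_swap34 S hS i Y V Z X
  have hn8 := nabT_swap34 S hS X Y V Z
  have hn9 : S.nabT Y V X Z = S.nabT Y X Z V := by
    rw [nabT_swap23 S hS Y V X Z, nabT_swap34 S hS Y X V Z, neg_neg]
  have hq7 : S.g (S.tv Y Z) (S.tv V X) = - S.g (S.tv X V) (S.tv Y Z) := by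
    rw [tv_skew S hS V X, g_negr S hS, hS.g_symm]
  have hq8 : S.g (S.tv V Z) (S.tv X Y) = - S.g (S.tv Z V) (S.tv X Y) := by
    rw [tv_skew S hS V Z, g_negl S hS]
  have hq9 : S.g (S.tv X Z) (S.tv Y V) = - S.g (S.tv Y V) (S.tv Z X) := by
    rw [tv_skew S hS X Z, g_negl S hS, hS.g_symm]
  rw [hn1] at b1
  rw [hr1, hr2, hr3, hn2, hn3, hn4, hq1, hq2, hq3] at b2
  rw [hr4, hr5, hn5, hn6, hn7, hq4, hq5, hq6] at b3
  rw [hr6, hr7, hr8, hn8, hn9, hq7, hq8, hq9] at b4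
  linear_combination b1 + b2 - b3 - b4

end SkewTorsionGeometry
/-- `∇T` is a 4-form iff the curvature is symmetric in pairs. -/
theorem nablaT_fourform_iff_pair_symm {n : ℕ} (S : SkewTorsionGeometry n)
    (hS : S.IsGood) :
    (∀ X Y Z W : S.V, S.nabT X Y Z W = - S.nabT Y X Z W) ↔
    (∀ X Y Z W : S.V, S.R X Y Z W = S.R Z W X Y) := by
  open SkewTorsionGeometry in
  rcases Nat.eq_zero_or_pos n with hn | hn
  · -- trivial case: the frame is empty, so every vector field is `0`
    subst hn
    have hv : ∀ X : S.V, X = 0 := fun X => by simpa using hS.frame_complete X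
    have hR : ∀ X Y Z W : S.V, S.R X Y Z W = 0 := by
      intro X Y Z W
      show S.g _ W = 0
      rw [hv W, g_zeror S hS]
    have hT : ∀ X Y Z W : S.V, S.nabT X Y Z W = 0 := by
      intro X Y Z W
      unfold SkewTorsionGeometry.nabT
      rw [hv W]
      simp only [tor_tv, g_zeror S hS, nab_zeror S hS, D_zero S hS]
      ring
    constructor
    · intro _ X Y Z W; rw [hR, hR]
    · intro _ X Y Z W; rw [hT, hT, neg_zero]
  · have i : Fin n := ⟨0, hn⟩
    constructor
    · intro H X Y Z W
      have m := master S hS i X Y Z W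
      have e1 := H Y X Z W
      have e2 : S.nabT Z X Y W = S.nabT X Y Z W := by
        linear_combination H Z X Y W - nabT_swap23 S hS X Z Y W
      have e3 : S.nabT W X Y Z = - S.nabT X Y Z W := by
        linear_combination H W X Y Z - nabT_swap23 S hS X W Y Z + nabT_swap34 S hS X Y W Z
      have h0 : (S.R X Y Z W - S.R Z W X Y) + (S.R X Y Z W - S.R Z W X Y) = 0 := by
        linear_combination m - e1 - e2 + e3
      exact sub_eq_zero.mp (half_cancel S h0)
    · intro H X Y Z W
      have F : ∀ A B C D : S.V,
          S.nabT A B C D - S.nabT B A C D - S.nabT C A B D + S.nabT D A B C = 0 := by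
        intro A B C D
        have m := master S hS i A B C D
        rw [H A B C D] at m
        linear_combination -m
      have rho : ∀ A B C D : S.V, S.nabT A B C D = - S.nabT D A B C := by
        intro A B C D
        have F1 := F A B C D
        have F2 := F A C B D
        have s1 := nabT_swap23 S hS A B C D
        have s2 := nabT_swap34 S hS D A C B
        have h0 : S.nabT A B C D + S.nabT D A B C
            + (S.nabT A B C D + S.nabT D A B C) = 0 := by
          linear_combination F1 - F2 + s1 + s2
        exact eq_neg_of_add_eq_zero_left (half_cancel S h0)
      have t1 := rho Y X Z W
      have t2 := nabT_swap23 S hS W Y X Z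
      have t3 := rho X Y Z W
      linear_combination t3 + t1 - t2
end

section
/- Let ∇ be a metric connection with torsion 3-form T. Then R(V,X,Y,Z) + R(V,Y,Z,X) + R(V,Z,X,Y) = -(1/2) dT(X,Y,Z,V) + (∇_V T)(X,Y,Z) for all vector fields X, Y, Z, V. -/
open scoped BigOperators

namespace STGAux

variable {n : ℕ} {S : SkewTorsionGeometry n}

section Lemmas
variable (hS : S.IsGood)
include hS

lemma gzl (v : S.V) : S.g 0 v = 0 := by
  have h := hS.g_addl 0 0 v; rw [add_zero] at h; linear_combination -h

lemma gnl (u v : S.V) : S.g (-u) v = -(S.g u v) := by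
  have h := hS.g_addl u (-u) v; rw [add_neg_cancel, gzl hS] at h; linear_combination -h

lemma gsl (u v w : S.V) : S.g (u - v) w = S.g u w - S.g v w := by
  rw [sub_eq_add_neg, hS.g_addl, gnl hS, sub_eq_add_neg]

lemma gar (u v w : S.V) : S.g u (v + w) = S.g u v + S.g u w := by
  rw [hS.g_symm, hS.g_addl, hS.g_symm v u, hS.g_symm w u]

lemma gzr (v : S.V) : S.g v 0 = 0 := by rw [hS.g_symm, gzl hS]

lemma gnr (u v : S.V) : S.g u (-v) = -(S.g u v) := by
  rw [hS.g_symm, gnl hS, hS.g_symm v u]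

lemma gsr (u v w : S.V) : S.g u (v - w) = S.g u v - S.g u w := by
  rw [hS.g_symm, gsl hS, hS.g_symm v u, hS.g_symm w u]

lemma gmr (f : S.C) (u v : S.V) : S.g u (f • v) = f * S.g u v := by
  rw [hS.g_symm, hS.g_smull, hS.g_symm v u]

lemma nzr (x : S.V) : S.nab x 0 = 0 := by
  have h := hS.nab_addr x 0 0; rw [add_zero] at h
  have h2 : S.nab x 0 + S.nab x 0 = S.nab x 0 + 0 := by rw [← h, add_zero]
  exact add_left_cancel h2

lemma nnr (x u : S.V) : S.nab x (-u) = -(S.nab x u) := by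
  have h := hS.nab_addr x u (-u); rw [add_neg_cancel, nzr hS] at h
  exact (neg_eq_of_add_eq_zero_right h.symm).symm

lemma nsr (x u v : S.V) : S.nab x (u - v) = S.nab x u - S.nab x v := by
  rw [sub_eq_add_neg, hS.nab_addr, nnr hS, sub_eq_add_neg]

lemma nzl (x : S.V) : S.nab 0 x = 0 := by
  have h := hS.nab_addl 0 0 x; rw [add_zero] at h
  have h2 : S.nab 0 x + S.nab 0 x = S.nab 0 x + 0 := by rw [← h, add_zero]
  exact add_left_cancel h2

lemma nnl (u x : S.V) : S.nab (-u) x = -(S.nab u x) := by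
  have h := hS.nab_addl u (-u) x; rw [add_neg_cancel, nzl hS] at h
  exact (neg_eq_of_add_eq_zero_right h.symm).symm

lemma Dzero (x : S.V) : S.D x (0 : S.C) = 0 := by
  have h := hS.D_add x 0 0; rw [add_zero] at h; linear_combination -h

lemma Dneg (x : S.V) (f : S.C) : S.D x (-f) = -(S.D x f) := by
  have h := hS.D_add x f (-f); rw [add_neg_cancel, Dzero hS] at h; linear_combination -h

lemma TorExp (u v w : S.V) :
    S.Tor u v w = S.g (S.nab u v) w - S.g (S.nab v u) w - S.g (S.lie u v) w := by
  simp only [SkewTorsionGeometry.Tor]; rw [gsl hS, gsl hS]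

lemma DTorExp (a b c d : S.V) :
    S.D a (S.Tor b c d) =
      S.g (S.nab a (S.nab b c)) d - S.g (S.nab a (S.nab c b)) d - S.g (S.nab a (S.lie b c)) d
      + S.g (S.nab b c) (S.nab a d) - S.g (S.nab c b) (S.nab a d)
      - S.g (S.lie b c) (S.nab a d) := by
  simp only [SkewTorsionGeometry.Tor]
  rw [hS.nab_metric, nsr hS, nsr hS, gsl hS, gsl hS, gsl hS, gsl hS]
  ring

lemma RExp (a b c d : S.V) :
    S.R a b c d = S.g (S.nab a (S.nab b c)) d - S.g (S.nab b (S.nab a c)) d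
      - S.g (S.nab (S.lie a b) c) d := by
  simp only [SkewTorsionGeometry.R]; rw [gsl hS, gsl hS]

lemma torSwap (u v w : S.V) : S.Tor u v w = -(S.Tor v u w) := by
  simp only [SkewTorsionGeometry.Tor]
  rw [hS.lie_skew u v]
  have h : S.nab u v - S.nab v u - -(S.lie v u) = -(S.nab v u - S.nab u v - S.lie v u) := by
    abel
  rw [h, gnl hS]

lemma torRot (u v w : S.V) : S.Tor u v w = S.Tor v w u := by
  rw [torSwap hS, hS.torsion_skew v u w, neg_neg]

lemma veq {u v : S.V} (h : ∀ w, S.g u w = S.g v w) : u = v := by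
  have hu := hS.frame_complete u
  have hv := hS.frame_complete v
  rw [hu, hv]
  exact Finset.sum_congr rfl fun i _ => by rw [h]

lemma lieGform (a u c : S.V) :
    S.g (S.lie a u) c = S.g (S.nab a u) c - S.g (S.nab u a) c + S.g (S.nab a c) u
      - S.g (S.nab c a) u - S.g (S.lie a c) u := by
  have h := hS.torsion_skew a u c
  rw [TorExp hS a u c, TorExp hS a c u] at h
  linear_combination -h

lemma lieAddr (a u v : S.V) : S.lie a (u + v) = S.lie a u + S.lie a v := by
  apply veq hS; intro w
  have hsum := lieGform hS a (u + v) w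
  simp only [hS.nab_addr, hS.nab_addl, hS.g_addl, gar hS] at hsum
  rw [hsum, hS.g_addl, lieGform hS a u w, lieGform hS a v w]
  ring

lemma lieZr (a : S.V) : S.lie a 0 = 0 := by
  have h := lieAddr hS a 0 0; rw [add_zero] at h
  have h2 : S.lie a 0 + S.lie a 0 = S.lie a 0 + 0 := by rw [← h, add_zero]
  exact add_left_cancel h2

lemma lieNr (a u : S.V) : S.lie a (-u) = -(S.lie a u) := by
  have h := lieAddr hS a u (-u); rw [add_neg_cancel, lieZr hS] at h
  exact (neg_eq_of_add_eq_zero_right h.symm).symm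

lemma lieNl (u v : S.V) : S.lie (-u) v = -(S.lie u v) := by
  rw [hS.lie_skew (-u) v, lieNr hS, neg_neg, hS.lie_skew v u]

lemma lieSmulr (a : S.V) (f : S.C) (u : S.V) :
    S.lie a (f • u) = f • S.lie a u + (S.D a f) • u := by
  apply veq hS; intro w
  have hsum := lieGform hS a (f • u) w
  rw [hS.nab_leibniz, hS.nab_smull, hS.g_addl, hS.g_smull, hS.g_smull, hS.g_smull,
    gmr hS, gmr hS, gmr hS] at hsum
  rw [hsum, hS.g_addl, hS.g_smull, hS.g_smull, lieGform hS a u w]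
  ring

lemma lieSmull (f : S.C) (u w : S.V) :
    S.lie (f • u) w = f • S.lie u w - (S.D w f) • u := by
  rw [hS.lie_skew (f • u) w, lieSmulr hS w f u, hS.lie_skew u w]
  module

lemma lieAddl (u v w : S.V) : S.lie (u + v) w = S.lie u w + S.lie v w := by
  rw [hS.lie_skew (u + v) w, lieAddr hS, hS.lie_skew u w, hS.lie_skew v w]
  module

lemma Dcomm (e : S.V) (he : S.g e e = 1) (a b : S.V) (f : S.C) :
    S.D a (S.D b f) = S.D b (S.D a f) + S.D (S.lie a b) f := by
  have j := hS.jacobi a b (f • e)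
  rw [lieSmulr hS (S.lie a b) f e, lieSmulr hS b f e, hS.lie_skew (f • e) a,
    lieSmulr hS a f e, lieNl hS, lieAddl hS, lieAddl hS, lieSmull hS f (S.lie b e) a,
    lieSmull hS (S.D b f) e a, lieSmull hS f (S.lie a e) b, lieSmull hS (S.D a f) e b,
    hS.lie_skew e a, hS.lie_skew e b] at j
  have j3 := hS.jacobi a b e
  rw [hS.lie_skew e a, lieNl hS] at j3
  have jg := congrArg (fun t => S.g t e) j
  have j3g := congrArg (fun t => S.g t e) j3
  simp only [hS.g_addl, gsl hS, gnl hS, hS.g_smull, gzl hS, he, mul_one] at jg j3g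
  linear_combination f * j3g - jg

lemma pairSkew (e : S.V) (he : S.g e e = 1) (a b c d : S.V) :
    S.g (S.nab a (S.nab b c)) d - S.g (S.nab b (S.nab a c)) d - S.g (S.nab (S.lie a b) c) d
      + S.g (S.nab a (S.nab b d)) c - S.g (S.nab b (S.nab a d)) c
      - S.g (S.nab (S.lie a b) d) c = 0 := by
  have h1 : S.D a (S.D b (S.g c d)) =
      S.g (S.nab a (S.nab b c)) d + S.g (S.nab b c) (S.nab a d)
      + S.g (S.nab a c) (S.nab b d) + S.g c (S.nab a (S.nab b d)) := by
    rw [hS.nab_metric b c d, hS.D_add, hS.nab_metric, hS.nab_metric]; ring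
  have h2 : S.D b (S.D a (S.g c d)) =
      S.g (S.nab b (S.nab a c)) d + S.g (S.nab a c) (S.nab b d)
      + S.g (S.nab b c) (S.nab a d) + S.g c (S.nab b (S.nab a d)) := by
    rw [hS.nab_metric a c d, hS.D_add, hS.nab_metric, hS.nab_metric]; ring
  have h3 := hS.nab_metric (S.lie a b) c d
  have h4 := Dcomm hS e he a b (S.g c d)
  have s1 := hS.g_symm c (S.nab a (S.nab b d))
  have s2 := hS.g_symm c (S.nab b (S.nab a d))
  have s3 := hS.g_symm c (S.nab (S.lie a b) d)
  linear_combination -h1 + h2 + h3 + h4 - s1 + s2 + s3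

end Lemmas
end STGAux

/-- `R(W,X,Y,Z) + R(W,Y,Z,X) + R(W,Z,X,Y) = -(1/2) dT(X,Y,Z,W) + (∇_W T)(X,Y,Z)`. -/
theorem cyclic_last_three_identity {n : ℕ} (S : SkewTorsionGeometry n)
    (hS : S.IsGood) (X Y Z W : S.V) :
    S.R W X Y Z + S.R W Y Z X + S.R W Z X Y =
      -((1/2 : ℝ) • S.dT X Y Z W) + S.nabT W X Y Z := by
  by_cases hn : n = 0
  · subst hn
    have triv : ∀ v : S.V, v = 0 := fun v => by
      have h := hS.frame_complete v
      simpa using h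
    have hg : ∀ u v : S.V, S.g u v = 0 := fun u v => by
      rw [triv u]; exact STGAux.gzl hS v
    have hT : ∀ u v w : S.V, S.Tor u v w = 0 := fun u v w => by
      simp only [SkewTorsionGeometry.Tor, hg]
    simp only [SkewTorsionGeometry.R, SkewTorsionGeometry.nabT, SkewTorsionGeometry.dT, hT, hg,
      STGAux.Dzero hS, sub_zero, zero_sub, neg_zero, add_zero, zero_add, smul_zero, neg_neg]
  · have hpos : 0 < n := Nat.pos_of_ne_zero hn
    set e := S.frame ⟨0, hpos⟩ with he_def
    have he : S.g e e = 1 := by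
      have h := hS.frame_orth ⟨0, hpos⟩ ⟨0, hpos⟩
      simpa using h
    have c1 : S.Tor (S.nab W X) Y Z = S.Tor Y Z (S.nab W X) :=
      STGAux.torRot hS (S.nab W X) Y Z
    have c2 : S.Tor X (S.nab W Y) Z = S.Tor Z X (S.nab W Y) :=
      (STGAux.torRot hS X (S.nab W Y) Z).trans (STGAux.torRot hS (S.nab W Y) Z X)
    have key : S.dT X Y Z W =
        (S.nabT W X Y Z - (S.R W X Y Z + S.R W Y Z X + S.R W Z X Y)) +
        (S.nabT W X Y Z - (S.R W X Y Z + S.R W Y Z X + S.R W Z X Y)) := by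
      simp only [SkewTorsionGeometry.dT, SkewTorsionGeometry.nabT]
      rw [c1, c2]
      rw [STGAux.DTorExp hS X Y Z W, STGAux.DTorExp hS Y X Z W, STGAux.DTorExp hS Z X Y W,
        STGAux.DTorExp hS W X Y Z, STGAux.RExp hS W X Y Z, STGAux.RExp hS W Y Z X,
        STGAux.RExp hS W Z X Y]
      simp only [STGAux.TorExp hS]
      have h0 : -S.g (S.lie (S.lie X Y) W) Z - S.g (S.lie (S.lie X Y) Z) W + S.g (S.nab (S.lie X Y) W) Z + S.g (S.nab (S.lie X Y) Z) W - S.g (S.nab W (S.lie X Y)) Z - S.g (S.nab Z (S.lie X Y)) W = 0 := by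
        have h := hS.torsion_skew (S.lie X Y) Z W
        rw [STGAux.TorExp hS (S.lie X Y) Z W, STGAux.TorExp hS (S.lie X Y) W Z] at h
        linear_combination h
      have h1 : -S.g (S.lie W (S.lie X Y)) Z - S.g (S.lie W Z) (S.lie X Y) - S.g (S.nab (S.lie X Y) W) Z + S.g (S.nab W (S.lie X Y)) Z + S.g (S.nab W Z) (S.lie X Y) - S.g (S.nab Z W) (S.lie X Y) = 0 := by
        have h := hS.torsion_skew W (S.lie X Y) Z
        rw [STGAux.TorExp hS W (S.lie X Y) Z, STGAux.TorExp hS W Z (S.lie X Y)] at h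
        linear_combination h
      have h2 : -S.g (S.lie (S.lie X Z) W) Y - S.g (S.lie (S.lie X Z) Y) W + S.g (S.nab (S.lie X Z) W) Y + S.g (S.nab (S.lie X Z) Y) W - S.g (S.nab W (S.lie X Z)) Y - S.g (S.nab Y (S.lie X Z)) W = 0 := by
        have h := hS.torsion_skew (S.lie X Z) Y W
        rw [STGAux.TorExp hS (S.lie X Z) Y W, STGAux.TorExp hS (S.lie X Z) W Y] at h
        linear_combination h
      have h3 : -S.g (S.lie Y (S.lie X Z)) W - S.g (S.lie Y W) (S.lie X Z) - S.g (S.nab (S.lie X Z) Y) W - S.g (S.nab W Y) (S.lie X Z) + S.g (S.nab Y (S.lie X Z)) W + S.g (S.nab Y W) (S.lie X Z) = 0 := by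
        have h := hS.torsion_skew Y (S.lie X Z) W
        rw [STGAux.TorExp hS Y (S.lie X Z) W, STGAux.TorExp hS Y W (S.lie X Z)] at h
        linear_combination h
      have h4 : -S.g (S.lie (S.lie X W) Y) Z - S.g (S.lie (S.lie X W) Z) Y + S.g (S.nab (S.lie X W) Y) Z + S.g (S.nab (S.lie X W) Z) Y - S.g (S.nab Y (S.lie X W)) Z - S.g (S.nab Z (S.lie X W)) Y = 0 := by
        have h := hS.torsion_skew (S.lie X W) Y Z
        rw [STGAux.TorExp hS (S.lie X W) Y Z, STGAux.TorExp hS (S.lie X W) Z Y] at h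
        linear_combination h
      have h5 : -S.g (S.lie Y (S.lie X W)) Z - S.g (S.lie Y Z) (S.lie X W) - S.g (S.nab (S.lie X W) Y) Z + S.g (S.nab Y (S.lie X W)) Z + S.g (S.nab Y Z) (S.lie X W) - S.g (S.nab Z Y) (S.lie X W) = 0 := by
        have h := hS.torsion_skew Y (S.lie X W) Z
        rw [STGAux.TorExp hS Y (S.lie X W) Z, STGAux.TorExp hS Y Z (S.lie X W)] at h
        linear_combination h
      have h6 : -S.g (S.lie Z (S.lie X W)) Y - S.g (S.lie Z Y) (S.lie X W) - S.g (S.nab (S.lie X W) Z) Y - S.g (S.nab Y Z) (S.lie X W) + S.g (S.nab Z (S.lie X W)) Y + S.g (S.nab Z Y) (S.lie X W) = 0 := by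
        have h := hS.torsion_skew Z (S.lie X W) Y
        rw [STGAux.TorExp hS Z (S.lie X W) Y, STGAux.TorExp hS Z Y (S.lie X W)] at h
        linear_combination h
      have h7 : -S.g (S.lie (S.lie Y X) W) Z - S.g (S.lie (S.lie Y X) Z) W + S.g (S.nab (S.lie Y X) W) Z + S.g (S.nab (S.lie Y X) Z) W - S.g (S.nab W (S.lie Y X)) Z - S.g (S.nab Z (S.lie Y X)) W = 0 := by
        have h := hS.torsion_skew (S.lie Y X) Z W
        rw [STGAux.TorExp hS (S.lie Y X) Z W, STGAux.TorExp hS (S.lie Y X) W Z] at h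
        linear_combination h
      have h8 : -S.g (S.lie X (S.lie Y Z)) W - S.g (S.lie X W) (S.lie Y Z) - S.g (S.nab (S.lie Y Z) X) W - S.g (S.nab W X) (S.lie Y Z) + S.g (S.nab X (S.lie Y Z)) W + S.g (S.nab X W) (S.lie Y Z) = 0 := by
        have h := hS.torsion_skew X (S.lie Y Z) W
        rw [STGAux.TorExp hS X (S.lie Y Z) W, STGAux.TorExp hS X W (S.lie Y Z)] at h
        linear_combination h
      have h9 : -S.g (S.lie (S.lie Y W) X) Z - S.g (S.lie (S.lie Y W) Z) X + S.g (S.nab (S.lie Y W) X) Z + S.g (S.nab (S.lie Y W) Z) X - S.g (S.nab X (S.lie Y W)) Z - S.g (S.nab Z (S.lie Y W)) X = 0 := by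
        have h := hS.torsion_skew (S.lie Y W) X Z
        rw [STGAux.TorExp hS (S.lie Y W) X Z, STGAux.TorExp hS (S.lie Y W) Z X] at h
        linear_combination h
      have h10 : -S.g (S.lie Z (S.lie Y W)) X - S.g (S.lie Z X) (S.lie Y W) - S.g (S.nab (S.lie Y W) Z) X - S.g (S.nab X Z) (S.lie Y W) + S.g (S.nab Z (S.lie Y W)) X + S.g (S.nab Z X) (S.lie Y W) = 0 := by
        have h := hS.torsion_skew Z (S.lie Y W) X
        rw [STGAux.TorExp hS Z (S.lie Y W) X, STGAux.TorExp hS Z X (S.lie Y W)] at h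
        linear_combination h
      have h11 : -S.g (S.lie (S.lie Z X) W) Y - S.g (S.lie (S.lie Z X) Y) W + S.g (S.nab (S.lie Z X) W) Y + S.g (S.nab (S.lie Z X) Y) W - S.g (S.nab W (S.lie Z X)) Y - S.g (S.nab Y (S.lie Z X)) W = 0 := by
        have h := hS.torsion_skew (S.lie Z X) Y W
        rw [STGAux.TorExp hS (S.lie Z X) Y W, STGAux.TorExp hS (S.lie Z X) W Y] at h
        linear_combination h
      have h12 : -S.g (S.lie Y (S.lie Z X)) W - S.g (S.lie Y W) (S.lie Z X) - S.g (S.nab (S.lie Z X) Y) W - S.g (S.nab W Y) (S.lie Z X) + S.g (S.nab Y (S.lie Z X)) W + S.g (S.nab Y W) (S.lie Z X) = 0 := by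
        have h := hS.torsion_skew Y (S.lie Z X) W
        rw [STGAux.TorExp hS Y (S.lie Z X) W, STGAux.TorExp hS Y W (S.lie Z X)] at h
        linear_combination h
      have h13 : -S.g (S.lie W (S.lie Z X)) Y - S.g (S.lie W Y) (S.lie Z X) - S.g (S.nab (S.lie Z X) W) Y + S.g (S.nab W (S.lie Z X)) Y + S.g (S.nab W Y) (S.lie Z X) - S.g (S.nab Y W) (S.lie Z X) = 0 := by
        have h := hS.torsion_skew W (S.lie Z X) Y
        rw [STGAux.TorExp hS W (S.lie Z X) Y, STGAux.TorExp hS W Y (S.lie Z X)] at h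
        linear_combination h
      have h14 : -S.g (S.lie (S.lie Z Y) W) X - S.g (S.lie (S.lie Z Y) X) W + S.g (S.nab (S.lie Z Y) W) X + S.g (S.nab (S.lie Z Y) X) W - S.g (S.nab W (S.lie Z Y)) X - S.g (S.nab X (S.lie Z Y)) W = 0 := by
        have h := hS.torsion_skew (S.lie Z Y) X W
        rw [STGAux.TorExp hS (S.lie Z Y) X W, STGAux.TorExp hS (S.lie Z Y) W X] at h
        linear_combination h
      have h15 : -S.g (S.lie X (S.lie Z Y)) W - S.g (S.lie X W) (S.lie Z Y) - S.g (S.nab (S.lie Z Y) X) W - S.g (S.nab W X) (S.lie Z Y) + S.g (S.nab X (S.lie Z Y)) W + S.g (S.nab X W) (S.lie Z Y) = 0 := by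
        have h := hS.torsion_skew X (S.lie Z Y) W
        rw [STGAux.TorExp hS X (S.lie Z Y) W, STGAux.TorExp hS X W (S.lie Z Y)] at h
        linear_combination h
      have h16 : -S.g (S.lie X (S.lie Z W)) Y - S.g (S.lie X Y) (S.lie Z W) - S.g (S.nab (S.lie Z W) X) Y + S.g (S.nab X (S.lie Z W)) Y + S.g (S.nab X Y) (S.lie Z W) - S.g (S.nab Y X) (S.lie Z W) = 0 := by
        have h := hS.torsion_skew X (S.lie Z W) Y
        rw [STGAux.TorExp hS X (S.lie Z W) Y, STGAux.TorExp hS X Y (S.lie Z W)] at h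
        linear_combination h
      have h17 : -S.g (S.lie (S.lie W X) Y) Z - S.g (S.lie (S.lie W X) Z) Y + S.g (S.nab (S.lie W X) Y) Z + S.g (S.nab (S.lie W X) Z) Y - S.g (S.nab Y (S.lie W X)) Z - S.g (S.nab Z (S.lie W X)) Y = 0 := by
        have h := hS.torsion_skew (S.lie W X) Y Z
        rw [STGAux.TorExp hS (S.lie W X) Y Z, STGAux.TorExp hS (S.lie W X) Z Y] at h
        linear_combination h
      have h18 : -S.g (S.lie Y (S.lie W X)) Z - S.g (S.lie Y Z) (S.lie W X) - S.g (S.nab (S.lie W X) Y) Z + S.g (S.nab Y (S.lie W X)) Z + S.g (S.nab Y Z) (S.lie W X) - S.g (S.nab Z Y) (S.lie W X) = 0 := by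
        have h := hS.torsion_skew Y (S.lie W X) Z
        rw [STGAux.TorExp hS Y (S.lie W X) Z, STGAux.TorExp hS Y Z (S.lie W X)] at h
        linear_combination h
      have h19 : -S.g (S.lie Z (S.lie W X)) Y - S.g (S.lie Z Y) (S.lie W X) - S.g (S.nab (S.lie W X) Z) Y - S.g (S.nab Y Z) (S.lie W X) + S.g (S.nab Z (S.lie W X)) Y + S.g (S.nab Z Y) (S.lie W X) = 0 := by
        have h := hS.torsion_skew Z (S.lie W X) Y
        rw [STGAux.TorExp hS Z (S.lie W X) Y, STGAux.TorExp hS Z Y (S.lie W X)] at h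
        linear_combination h
      have h20 : -S.g (S.lie (S.lie W Y) X) Z - S.g (S.lie (S.lie W Y) Z) X + S.g (S.nab (S.lie W Y) X) Z + S.g (S.nab (S.lie W Y) Z) X - S.g (S.nab X (S.lie W Y)) Z - S.g (S.nab Z (S.lie W Y)) X = 0 := by
        have h := hS.torsion_skew (S.lie W Y) X Z
        rw [STGAux.TorExp hS (S.lie W Y) X Z, STGAux.TorExp hS (S.lie W Y) Z X] at h
        linear_combination h
      have h21 : -S.g (S.lie Z (S.lie W Y)) X - S.g (S.lie Z X) (S.lie W Y) - S.g (S.nab (S.lie W Y) Z) X - S.g (S.nab X Z) (S.lie W Y) + S.g (S.nab Z (S.lie W Y)) X + S.g (S.nab Z X) (S.lie W Y) = 0 := by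
        have h := hS.torsion_skew Z (S.lie W Y) X
        rw [STGAux.TorExp hS Z (S.lie W Y) X, STGAux.TorExp hS Z X (S.lie W Y)] at h
        linear_combination h
      have h22 : -S.g (S.lie (S.lie W Z) X) Y - S.g (S.lie (S.lie W Z) Y) X + S.g (S.nab (S.lie W Z) X) Y + S.g (S.nab (S.lie W Z) Y) X - S.g (S.nab X (S.lie W Z)) Y - S.g (S.nab Y (S.lie W Z)) X = 0 := by
        have h := hS.torsion_skew (S.lie W Z) X Y
        rw [STGAux.TorExp hS (S.lie W Z) X Y, STGAux.TorExp hS (S.lie W Z) Y X] at h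
        linear_combination h
      have h23 : -S.g (S.lie X (S.lie W Z)) Y - S.g (S.lie X Y) (S.lie W Z) - S.g (S.nab (S.lie W Z) X) Y + S.g (S.nab X (S.lie W Z)) Y + S.g (S.nab X Y) (S.lie W Z) - S.g (S.nab Y X) (S.lie W Z) = 0 := by
        have h := hS.torsion_skew X (S.lie W Z) Y
        rw [STGAux.TorExp hS X (S.lie W Z) Y, STGAux.TorExp hS X Y (S.lie W Z)] at h
        linear_combination h
      have h24 : -S.g (S.lie Y W) (S.nab X Z) - S.g (S.lie Y Z) (S.nab X W) - S.g (S.nab W Y) (S.nab X Z) - S.g (S.nab X (S.lie Y W)) Z - S.g (S.nab X (S.lie Y Z)) W - S.g (S.nab X (S.nab W Y)) Z + S.g (S.nab X (S.nab Y W)) Z + S.g (S.nab X (S.nab Y Z)) W - S.g (S.nab X (S.nab Z Y)) W + S.g (S.nab Y W) (S.nab X Z) + S.g (S.nab Y Z) (S.nab X W) - S.g (S.nab Z Y) (S.nab X W) = 0 := by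
        have h := congrArg (S.D X) (hS.torsion_skew Y Z W)
        rw [STGAux.Dneg hS] at h
        rw [STGAux.DTorExp hS X Y Z W, STGAux.DTorExp hS X Y W Z] at h
        linear_combination h
      have h25 : -S.g (S.lie Z W) (S.nab X Y) - S.g (S.lie Z Y) (S.nab X W) - S.g (S.nab W Z) (S.nab X Y) - S.g (S.nab X (S.lie Z W)) Y - S.g (S.nab X (S.lie Z Y)) W - S.g (S.nab X (S.nab W Z)) Y - S.g (S.nab X (S.nab Y Z)) W + S.g (S.nab X (S.nab Z W)) Y + S.g (S.nab X (S.nab Z Y)) W - S.g (S.nab Y Z) (S.nab X W) + S.g (S.nab Z W) (S.nab X Y) + S.g (S.nab Z Y) (S.nab X W) = 0 := by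
        have h := congrArg (S.D X) (hS.torsion_skew Z Y W)
        rw [STGAux.Dneg hS] at h
        rw [STGAux.DTorExp hS X Z Y W, STGAux.DTorExp hS X Z W Y] at h
        linear_combination h
      have h26 : -S.g (S.lie W Y) (S.nab X Z) - S.g (S.lie W Z) (S.nab X Y) + S.g (S.nab W Y) (S.nab X Z) + S.g (S.nab W Z) (S.nab X Y) - S.g (S.nab X (S.lie W Y)) Z - S.g (S.nab X (S.lie W Z)) Y + S.g (S.nab X (S.nab W Y)) Z + S.g (S.nab X (S.nab W Z)) Y - S.g (S.nab X (S.nab Y W)) Z - S.g (S.nab X (S.nab Z W)) Y - S.g (S.nab Y W) (S.nab X Z) - S.g (S.nab Z W) (S.nab X Y) = 0 := by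
        have h := congrArg (S.D X) (hS.torsion_skew W Y Z)
        rw [STGAux.Dneg hS] at h
        rw [STGAux.DTorExp hS X W Y Z, STGAux.DTorExp hS X W Z Y] at h
        linear_combination h
      have h27 : -S.g (S.lie X W) (S.nab Y Z) - S.g (S.lie X Z) (S.nab Y W) - S.g (S.nab W X) (S.nab Y Z) + S.g (S.nab X W) (S.nab Y Z) + S.g (S.nab X Z) (S.nab Y W) - S.g (S.nab Y (S.lie X W)) Z - S.g (S.nab Y (S.lie X Z)) W - S.g (S.nab Y (S.nab W X)) Z + S.g (S.nab Y (S.nab X W)) Z + S.g (S.nab Y (S.nab X Z)) W - S.g (S.nab Y (S.nab Z X)) W - S.g (S.nab Z X) (S.nab Y W) = 0 := by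
        have h := congrArg (S.D Y) (hS.torsion_skew X Z W)
        rw [STGAux.Dneg hS] at h
        rw [STGAux.DTorExp hS Y X Z W, STGAux.DTorExp hS Y X W Z] at h
        linear_combination h
      have h28 : -S.g (S.lie Z W) (S.nab Y X) - S.g (S.lie Z X) (S.nab Y W) - S.g (S.nab W Z) (S.nab Y X) - S.g (S.nab X Z) (S.nab Y W) - S.g (S.nab Y (S.lie Z W)) X - S.g (S.nab Y (S.lie Z X)) W - S.g (S.nab Y (S.nab W Z)) X - S.g (S.nab Y (S.nab X Z)) W + S.g (S.nab Y (S.nab Z W)) X + S.g (S.nab Y (S.nab Z X)) W + S.g (S.nab Z W) (S.nab Y X) + S.g (S.nab Z X) (S.nab Y W) = 0 := by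
        have h := congrArg (S.D Y) (hS.torsion_skew Z X W)
        rw [STGAux.Dneg hS] at h
        rw [STGAux.DTorExp hS Y Z X W, STGAux.DTorExp hS Y Z W X] at h
        linear_combination h
      have h29 : -S.g (S.lie W X) (S.nab Y Z) - S.g (S.lie W Z) (S.nab Y X) + S.g (S.nab W X) (S.nab Y Z) + S.g (S.nab W Z) (S.nab Y X) - S.g (S.nab X W) (S.nab Y Z) - S.g (S.nab Y (S.lie W X)) Z - S.g (S.nab Y (S.lie W Z)) X + S.g (S.nab Y (S.nab W X)) Z + S.g (S.nab Y (S.nab W Z)) X - S.g (S.nab Y (S.nab X W)) Z - S.g (S.nab Y (S.nab Z W)) X - S.g (S.nab Z W) (S.nab Y X) = 0 := by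
        have h := congrArg (S.D Y) (hS.torsion_skew W X Z)
        rw [STGAux.Dneg hS] at h
        rw [STGAux.DTorExp hS Y W X Z, STGAux.DTorExp hS Y W Z X] at h
        linear_combination h
      have h30 : -S.g (S.lie X W) (S.nab Z Y) - S.g (S.lie X Y) (S.nab Z W) - S.g (S.nab W X) (S.nab Z Y) + S.g (S.nab X W) (S.nab Z Y) + S.g (S.nab X Y) (S.nab Z W) - S.g (S.nab Y X) (S.nab Z W) - S.g (S.nab Z (S.lie X W)) Y - S.g (S.nab Z (S.lie X Y)) W - S.g (S.nab Z (S.nab W X)) Y + S.g (S.nab Z (S.nab X W)) Y + S.g (S.nab Z (S.nab X Y)) W - S.g (S.nab Z (S.nab Y X)) W = 0 := by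
        have h := congrArg (S.D Z) (hS.torsion_skew X Y W)
        rw [STGAux.Dneg hS] at h
        rw [STGAux.DTorExp hS Z X Y W, STGAux.DTorExp hS Z X W Y] at h
        linear_combination h
      have h31 : -S.g (S.lie Y W) (S.nab Z X) - S.g (S.lie Y X) (S.nab Z W) - S.g (S.nab W Y) (S.nab Z X) - S.g (S.nab X Y) (S.nab Z W) + S.g (S.nab Y W) (S.nab Z X) + S.g (S.nab Y X) (S.nab Z W) - S.g (S.nab Z (S.lie Y W)) X - S.g (S.nab Z (S.lie Y X)) W - S.g (S.nab Z (S.nab W Y)) X - S.g (S.nab Z (S.nab X Y)) W + S.g (S.nab Z (S.nab Y W)) X + S.g (S.nab Z (S.nab Y X)) W = 0 := by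
        have h := congrArg (S.D Z) (hS.torsion_skew Y X W)
        rw [STGAux.Dneg hS] at h
        rw [STGAux.DTorExp hS Z Y X W, STGAux.DTorExp hS Z Y W X] at h
        linear_combination h
      have h32 : -S.g (S.lie W X) (S.nab Z Y) - S.g (S.lie W Y) (S.nab Z X) + S.g (S.nab W X) (S.nab Z Y) + S.g (S.nab W Y) (S.nab Z X) - S.g (S.nab X W) (S.nab Z Y) - S.g (S.nab Y W) (S.nab Z X) - S.g (S.nab Z (S.lie W X)) Y - S.g (S.nab Z (S.lie W Y)) X + S.g (S.nab Z (S.nab W X)) Y + S.g (S.nab Z (S.nab W Y)) X - S.g (S.nab Z (S.nab X W)) Y - S.g (S.nab Z (S.nab Y W)) X = 0 := by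
        have h := congrArg (S.D Z) (hS.torsion_skew W X Y)
        rw [STGAux.Dneg hS] at h
        rw [STGAux.DTorExp hS Z W X Y, STGAux.DTorExp hS Z W Y X] at h
        linear_combination h
      have h33 : -S.g (S.lie X Y) (S.nab W Z) - S.g (S.lie X Z) (S.nab W Y) - S.g (S.nab W (S.lie X Y)) Z - S.g (S.nab W (S.lie X Z)) Y + S.g (S.nab W (S.nab X Y)) Z + S.g (S.nab W (S.nab X Z)) Y - S.g (S.nab W (S.nab Y X)) Z - S.g (S.nab W (S.nab Z X)) Y + S.g (S.nab X Y) (S.nab W Z) + S.g (S.nab X Z) (S.nab W Y) - S.g (S.nab Y X) (S.nab W Z) - S.g (S.nab Z X) (S.nab W Y) = 0 := by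
        have h := congrArg (S.D W) (hS.torsion_skew X Y Z)
        rw [STGAux.Dneg hS] at h
        rw [STGAux.DTorExp hS W X Y Z, STGAux.DTorExp hS W X Z Y] at h
        linear_combination h
      have h34 : -S.g (S.lie Z X) (S.nab W Y) - S.g (S.lie Z Y) (S.nab W X) - S.g (S.nab W (S.lie Z X)) Y - S.g (S.nab W (S.lie Z Y)) X - S.g (S.nab W (S.nab X Z)) Y - S.g (S.nab W (S.nab Y Z)) X + S.g (S.nab W (S.nab Z X)) Y + S.g (S.nab W (S.nab Z Y)) X - S.g (S.nab X Z) (S.nab W Y) - S.g (S.nab Y Z) (S.nab W X) + S.g (S.nab Z X) (S.nab W Y) + S.g (S.nab Z Y) (S.nab W X) = 0 := by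
        have h := congrArg (S.D W) (hS.torsion_skew Z X Y)
        rw [STGAux.Dneg hS] at h
        rw [STGAux.DTorExp hS W Z X Y, STGAux.DTorExp hS W Z Y X] at h
        linear_combination h
      have h35 : S.g (S.lie (S.lie X Y) Z) W + S.g (S.lie (S.lie Y Z) X) W + S.g (S.lie (S.lie Z X) Y) W = 0 := by
        have h := hS.jacobi X Y Z
        have h2 : S.g (S.lie (S.lie X Y) Z + S.lie (S.lie Y Z) X + S.lie (S.lie Z X) Y) W = S.g 0 W := by rw [h]
        rw [hS.g_addl, hS.g_addl, STGAux.gzl hS] at h2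
        linear_combination h2
      have h36 : S.g (S.lie (S.lie W X) Y) Z + S.g (S.lie (S.lie X Y) W) Z + S.g (S.lie (S.lie Y W) X) Z = 0 := by
        have h := hS.jacobi X Y W
        have h2 : S.g (S.lie (S.lie X Y) W + S.lie (S.lie Y W) X + S.lie (S.lie W X) Y) Z = S.g 0 Z := by rw [h]
        rw [hS.g_addl, hS.g_addl, STGAux.gzl hS] at h2
        linear_combination h2
      have h37 : S.g (S.lie (S.lie X Z) Y) W + S.g (S.lie (S.lie Y X) Z) W + S.g (S.lie (S.lie Z Y) X) W = 0 := by
        have h := hS.jacobi X Z Y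
        have h2 : S.g (S.lie (S.lie X Z) Y + S.lie (S.lie Z Y) X + S.lie (S.lie Y X) Z) W = S.g 0 W := by rw [h]
        rw [hS.g_addl, hS.g_addl, STGAux.gzl hS] at h2
        linear_combination h2
      have h38 : S.g (S.lie (S.lie W X) Z) Y + S.g (S.lie (S.lie X Z) W) Y + S.g (S.lie (S.lie Z W) X) Y = 0 := by
        have h := hS.jacobi X Z W
        have h2 : S.g (S.lie (S.lie X Z) W + S.lie (S.lie Z W) X + S.lie (S.lie W X) Z) Y = S.g 0 Y := by rw [h]
        rw [hS.g_addl, hS.g_addl, STGAux.gzl hS] at h2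
        linear_combination h2
      have h39 : S.g (S.lie (S.lie W Y) X) Z + S.g (S.lie (S.lie X W) Y) Z + S.g (S.lie (S.lie Y X) W) Z = 0 := by
        have h := hS.jacobi X W Y
        have h2 : S.g (S.lie (S.lie X W) Y + S.lie (S.lie W Y) X + S.lie (S.lie Y X) W) Z = S.g 0 Z := by rw [h]
        rw [hS.g_addl, hS.g_addl, STGAux.gzl hS] at h2
        linear_combination h2
      have h40 : S.g (S.lie (S.lie W Z) X) Y + S.g (S.lie (S.lie X W) Z) Y + S.g (S.lie (S.lie Z X) W) Y = 0 := by
        have h := hS.jacobi X W Z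
        have h2 : S.g (S.lie (S.lie X W) Z + S.lie (S.lie W Z) X + S.lie (S.lie Z X) W) Y = S.g 0 Y := by rw [h]
        rw [hS.g_addl, hS.g_addl, STGAux.gzl hS] at h2
        linear_combination h2
      have h41 : S.g (S.lie (S.lie W Z) Y) X + S.g (S.lie (S.lie Y W) Z) X + S.g (S.lie (S.lie Z Y) W) X = 0 := by
        have h := hS.jacobi Y W Z
        have h2 : S.g (S.lie (S.lie Y W) Z + S.lie (S.lie W Z) Y + S.lie (S.lie Z Y) W) X = S.g 0 X := by rw [h]
        rw [hS.g_addl, hS.g_addl, STGAux.gzl hS] at h2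
        linear_combination h2
      have h42 := STGAux.pairSkew hS e he X Y Z W
      have h43 := STGAux.pairSkew hS e he X Z Y W
      have h44 := STGAux.pairSkew hS e he X W Y Z
      have h45 := STGAux.pairSkew hS e he Y X Z W
      have h46 := STGAux.pairSkew hS e he Y Z X W
      have h47 := STGAux.pairSkew hS e he Y W X Z
      have h48 := STGAux.pairSkew hS e he W X Y Z
      have h49 := STGAux.pairSkew hS e he W Y X Z
      have h50 := STGAux.pairSkew hS e he W Z X Y
      have h51 : S.g (S.nab W Y) (S.nab Z X) = S.g (S.nab Z X) (S.nab W Y) := hS.g_symm (S.nab W Y) (S.nab Z X)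
      have h52 : S.g (S.lie Y Z) (S.lie X W) = S.g (S.lie X W) (S.lie Y Z) := hS.g_symm (S.lie Y Z) (S.lie X W)
      have h53 : S.g (S.lie X W) (S.nab Y Z) = S.g (S.nab Y Z) (S.lie X W) := hS.g_symm (S.lie X W) (S.nab Y Z)
      have h54 : S.g (S.nab X Z) (S.lie Y W) = S.g (S.lie Y W) (S.nab X Z) := hS.g_symm (S.nab X Z) (S.lie Y W)
      have h55 : S.g (S.lie Z (S.lie Y W)) X = S.g X (S.lie Z (S.lie Y W)) := hS.g_symm (S.lie Z (S.lie Y W)) X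
      have h56 : S.g (S.lie (S.lie Z X) W) Y = S.g Y (S.lie (S.lie Z X) W) := hS.g_symm (S.lie (S.lie Z X) W) Y
      have h57 : S.g (S.lie (S.lie X W) Z) Y = S.g Y (S.lie (S.lie X W) Z) := hS.g_symm (S.lie (S.lie X W) Z) Y
      have h58 : S.g (S.lie W Y) (S.nab Z X) = S.g (S.nab Z X) (S.lie W Y) := hS.g_symm (S.lie W Y) (S.nab Z X)
      have h59 : S.g (S.lie Z W) (S.nab X Y) = S.g (S.nab X Y) (S.lie Z W) := hS.g_symm (S.lie Z W) (S.nab X Y)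
      have h60 : S.g (S.lie X Y) (S.lie W Z) = S.g (S.lie W Z) (S.lie X Y) := hS.g_symm (S.lie X Y) (S.lie W Z)
      have h61 : S.g (S.nab Y Z) (S.nab X W) = S.g (S.nab X W) (S.nab Y Z) := hS.g_symm (S.nab Y Z) (S.nab X W)
      have h62 : S.g (S.lie Z X) (S.nab W Y) = S.g (S.nab W Y) (S.lie Z X) := hS.g_symm (S.lie Z X) (S.nab W Y)
      have h63 : S.g (S.nab Z W) (S.nab X Y) = S.g (S.nab X Y) (S.nab Z W) := hS.g_symm (S.nab Z W) (S.nab X Y)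
      have h64 : S.g (S.nab X W) (S.lie Y Z) = S.g (S.lie Y Z) (S.nab X W) := hS.g_symm (S.nab X W) (S.lie Y Z)
      have h65 : S.g (S.lie Y Z) (S.nab W X) = S.g (S.nab W X) (S.lie Y Z) := hS.g_symm (S.lie Y Z) (S.nab W X)
      have h66 : S.g (S.nab X Y) (S.lie W Z) = S.g (S.lie W Z) (S.nab X Y) := hS.g_symm (S.nab X Y) (S.lie W Z)
      have h67 : S.g (S.nab Z Y) (S.lie W X) = S.g (S.lie W X) (S.nab Z Y) := hS.g_symm (S.nab Z Y) (S.lie W X)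
      have h68 : S.g (S.lie (S.lie Y W) Z) X = S.g X (S.lie (S.lie Y W) Z) := hS.g_symm (S.lie (S.lie Y W) Z) X
      have h69 : S.g (S.nab W X) (S.lie Z Y) = S.g (S.lie Z Y) (S.nab W X) := hS.g_symm (S.nab W X) (S.lie Z Y)
      have h70 : S.g (S.nab Y X) (S.lie W Z) = S.g (S.lie W Z) (S.nab Y X) := hS.g_symm (S.nab Y X) (S.lie W Z)
      have h71 : S.g (S.nab Y W) (S.lie X Z) = S.g (S.lie X Z) (S.nab Y W) := hS.g_symm (S.nab Y W) (S.lie X Z)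
      have h72 : S.g (S.nab Y X) (S.lie Z W) = S.g (S.lie Z W) (S.nab Y X) := hS.g_symm (S.nab Y X) (S.lie Z W)
      have h73 : S.g (S.nab Y W) (S.nab Z X) = S.g (S.nab Z X) (S.nab Y W) := hS.g_symm (S.nab Y W) (S.nab Z X)
      have h74 : S.g (S.lie (S.lie X Z) Y) W = S.g W (S.lie (S.lie X Z) Y) := hS.g_symm (S.lie (S.lie X Z) Y) W
      have h75 : S.g (S.lie (S.lie Z X) Y) W = S.g W (S.lie (S.lie Z X) Y) := hS.g_symm (S.lie (S.lie Z X) Y) W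
      have h76 : S.g (S.nab (S.lie X W) Z) Y = S.g Y (S.nab (S.lie X W) Z) := hS.g_symm (S.nab (S.lie X W) Z) Y
      have h77 : S.g (S.lie (S.lie X Y) W) Z = S.g Z (S.lie (S.lie X Y) W) := hS.g_symm (S.lie (S.lie X Y) W) Z
      have h78 : S.g (S.lie W (S.lie Z X)) Y = S.g Y (S.lie W (S.lie Z X)) := hS.g_symm (S.lie W (S.lie Z X)) Y
      have h79 : S.g (S.nab W Z) (S.nab X Y) = S.g (S.nab X Y) (S.nab W Z) := hS.g_symm (S.nab W Z) (S.nab X Y)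
      have h80 : S.g (S.nab X W) (S.lie Z Y) = S.g (S.lie Z Y) (S.nab X W) := hS.g_symm (S.nab X W) (S.lie Z Y)
      have h81 : S.g (S.lie X W) (S.lie Z Y) = S.g (S.lie Z Y) (S.lie X W) := hS.g_symm (S.lie X W) (S.lie Z Y)
      have h82 : S.g (S.nab Z Y) (S.lie X W) = S.g (S.lie X W) (S.nab Z Y) := hS.g_symm (S.nab Z Y) (S.lie X W)
      have h83 : S.g (S.nab X Z) (S.nab W Y) = S.g (S.nab W Y) (S.nab X Z) := hS.g_symm (S.nab X Z) (S.nab W Y)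
      have h84 : S.g (S.lie (S.lie X Z) W) Y = S.g Y (S.lie (S.lie X Z) W) := hS.g_symm (S.lie (S.lie X Z) W) Y
      have h85 : S.g (S.lie Y W) (S.lie Z X) = S.g (S.lie Z X) (S.lie Y W) := hS.g_symm (S.lie Y W) (S.lie Z X)
      have h86 : S.g (S.lie W Y) (S.lie Z X) = S.g (S.lie Z X) (S.lie W Y) := hS.g_symm (S.lie W Y) (S.lie Z X)
      have h87 : S.g (S.lie Z (S.lie W X)) Y = S.g Y (S.lie Z (S.lie W X)) := hS.g_symm (S.lie Z (S.lie W X)) Y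
      have h88 : S.g (S.lie Y (S.lie X Z)) W = S.g W (S.lie Y (S.lie X Z)) := hS.g_symm (S.lie Y (S.lie X Z)) W
      have h89 : S.g (S.lie Z X) (S.nab Y W) = S.g (S.nab Y W) (S.lie Z X) := hS.g_symm (S.lie Z X) (S.nab Y W)
      have h90 : S.g (S.nab Y Z) (S.nab W X) = S.g (S.nab W X) (S.nab Y Z) := hS.g_symm (S.nab Y Z) (S.nab W X)
      have h91 : S.g (S.nab Y Z) (S.lie W X) = S.g (S.lie W X) (S.nab Y Z) := hS.g_symm (S.nab Y Z) (S.lie W X)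
      have h92 : S.g (S.lie X Z) (S.nab W Y) = S.g (S.nab W Y) (S.lie X Z) := hS.g_symm (S.lie X Z) (S.nab W Y)
      have h93 : S.g (S.lie (S.lie W Y) Z) X = S.g X (S.lie (S.lie W Y) Z) := hS.g_symm (S.lie (S.lie W Y) Z) X
      have h94 : S.g (S.lie (S.lie Z W) X) Y = S.g Y (S.lie (S.lie Z W) X) := hS.g_symm (S.lie (S.lie Z W) X) Y
      have h95 : S.g (S.nab Z Y) (S.nab W X) = S.g (S.nab W X) (S.nab Z Y) := hS.g_symm (S.nab Z Y) (S.nab W X)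
      have h96 : S.g (S.nab Z W) (S.lie X Y) = S.g (S.lie X Y) (S.nab Z W) := hS.g_symm (S.nab Z W) (S.lie X Y)
      have h97 : S.g (S.lie W (S.lie X Y)) Z = S.g Z (S.lie W (S.lie X Y)) := hS.g_symm (S.lie W (S.lie X Y)) Z
      have h98 : S.g (S.nab Z W) (S.nab Y X) = S.g (S.nab Y X) (S.nab Z W) := hS.g_symm (S.nab Z W) (S.nab Y X)
      have h99 : S.g (S.lie W Y) (S.nab X Z) = S.g (S.nab X Z) (S.lie W Y) := hS.g_symm (S.lie W Y) (S.nab X Z)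
      have h100 : S.g (S.nab (S.lie Z Y) W) X = S.g X (S.nab (S.lie Z Y) W) := hS.g_symm (S.nab (S.lie Z Y) W) X
      have h101 : S.g (S.nab (S.lie Y Z) W) X = S.g X (S.nab (S.lie Y Z) W) := hS.g_symm (S.nab (S.lie Y Z) W) X
      have h102 : S.g (S.lie Y W) (S.nab Z X) = S.g (S.nab Z X) (S.lie Y W) := hS.g_symm (S.lie Y W) (S.nab Z X)
      have h103 : S.g (S.lie X Y) (S.nab W Z) = S.g (S.nab W Z) (S.lie X Y) := hS.g_symm (S.lie X Y) (S.nab W Z)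
      have h104 : S.g (S.nab (S.lie W X) Z) Y = S.g Y (S.nab (S.lie W X) Z) := hS.g_symm (S.nab (S.lie W X) Z) Y
      have h105 : S.g (S.lie Y (S.lie W X)) Z = S.g Z (S.lie Y (S.lie W X)) := hS.g_symm (S.lie Y (S.lie W X)) Z
      have h106 : S.g (S.lie X (S.lie W Z)) Y = S.g Y (S.lie X (S.lie W Z)) := hS.g_symm (S.lie X (S.lie W Z)) Y
      have h107 : S.g (S.nab X W) (S.nab Z Y) = S.g (S.nab Z Y) (S.nab X W) := hS.g_symm (S.nab X W) (S.nab Z Y)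
      have h108 : S.g (S.lie Y (S.lie X W)) Z = S.g Z (S.lie Y (S.lie X W)) := hS.g_symm (S.lie Y (S.lie X W)) Z
      have h109 : S.g (S.nab Y X) (S.nab W Z) = S.g (S.nab W Z) (S.nab Y X) := hS.g_symm (S.nab Y X) (S.nab W Z)
      have h110 : S.g (S.nab Y W) (S.nab X Z) = S.g (S.nab X Z) (S.nab Y W) := hS.g_symm (S.nab Y W) (S.nab X Z)
      have h111 : S.g (S.lie Z (S.lie W Y)) X = S.g X (S.lie Z (S.lie W Y)) := hS.g_symm (S.lie Z (S.lie W Y)) X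
      have h112 : S.g (S.lie (S.lie Y X) W) Z = S.g Z (S.lie (S.lie Y X) W) := hS.g_symm (S.lie (S.lie Y X) W) Z
      have h113 : S.g (S.lie X (S.lie Z W)) Y = S.g Y (S.lie X (S.lie Z W)) := hS.g_symm (S.lie X (S.lie Z W)) Y
      have h114 : S.g (S.lie Z (S.lie X W)) Y = S.g Y (S.lie Z (S.lie X W)) := hS.g_symm (S.lie Z (S.lie X W)) Y
      have h115 : S.g (S.lie Y Z) (S.lie X W) = -(S.g (S.lie Z Y) (S.lie X W)) := by rw [hS.lie_skew Y Z, STGAux.gnl hS]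
      have h116 : S.g (S.lie Y Z) (S.lie X W) = -(S.g (S.lie Y Z) (S.lie W X)) := by rw [hS.lie_skew X W, STGAux.gnr hS]
      have h117 : S.g Y (S.nab (S.lie W X) Z) = -(S.g Y (S.nab (S.lie X W) Z)) := by rw [hS.lie_skew W X, STGAux.nnl hS, STGAux.gnr hS]
      have h118 : S.g (S.nab X Z) (S.lie Y W) = -(S.g (S.nab X Z) (S.lie W Y)) := by rw [hS.lie_skew Y W, STGAux.gnr hS]
      have h119 : S.g (S.nab X (S.lie Z W)) Y = -(S.g (S.nab X (S.lie W Z)) Y) := by rw [hS.lie_skew Z W, STGAux.nnr hS, STGAux.gnl hS]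
      have h120 : S.g X (S.nab (S.lie Z Y) W) = -(S.g X (S.nab (S.lie Y Z) W)) := by rw [hS.lie_skew Z Y, STGAux.nnl hS, STGAux.gnr hS]
      have h121 : S.g Y (S.lie X (S.lie Z W)) = -(S.g Y (S.lie (S.lie Z W) X)) := by rw [hS.lie_skew X (S.lie Z W), STGAux.gnr hS]
      have h122 : S.g Y (S.lie X (S.lie Z W)) = -(S.g Y (S.lie X (S.lie W Z))) := by rw [hS.lie_skew Z W, STGAux.lieNr hS, STGAux.gnr hS]
      have h123 : S.g X (S.lie (S.lie W Y) Z) = -(S.g X (S.lie Z (S.lie W Y))) := by rw [hS.lie_skew (S.lie W Y) Z, STGAux.gnr hS]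
      have h124 : S.g X (S.lie (S.lie W Y) Z) = -(S.g X (S.lie (S.lie Y W) Z)) := by rw [hS.lie_skew W Y, STGAux.lieNl hS, STGAux.gnr hS]
      have h125 : S.g (S.lie Y X) (S.lie Z W) = -(S.g (S.lie X Y) (S.lie Z W)) := by rw [hS.lie_skew Y X, STGAux.gnl hS]
      have h126 : S.g (S.lie Y X) (S.lie Z W) = -(S.g (S.lie Y X) (S.lie W Z)) := by rw [hS.lie_skew Z W, STGAux.gnr hS]
      have h127 : S.g (S.lie X (S.lie Z Y)) W = -(S.g (S.lie (S.lie Z Y) X) W) := by rw [hS.lie_skew X (S.lie Z Y), STGAux.gnl hS]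
      have h128 : S.g (S.lie X (S.lie Z Y)) W = -(S.g (S.lie X (S.lie Y Z)) W) := by rw [hS.lie_skew Z Y, STGAux.lieNr hS, STGAux.gnl hS]
      have h129 : S.g (S.lie W Y) (S.lie X Z) = -(S.g (S.lie Y W) (S.lie X Z)) := by rw [hS.lie_skew W Y, STGAux.gnl hS]
      have h130 : S.g (S.lie W Y) (S.lie X Z) = -(S.g (S.lie W Y) (S.lie Z X)) := by rw [hS.lie_skew X Z, STGAux.gnr hS]
      have h131 : S.g Y (S.lie Z (S.lie X W)) = -(S.g Y (S.lie (S.lie X W) Z)) := by rw [hS.lie_skew Z (S.lie X W), STGAux.gnr hS]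
      have h132 : S.g Y (S.lie Z (S.lie X W)) = -(S.g Y (S.lie Z (S.lie W X))) := by rw [hS.lie_skew X W, STGAux.lieNr hS, STGAux.gnr hS]
      have h133 : S.g (S.nab W (S.lie Z X)) Y = -(S.g (S.nab W (S.lie X Z)) Y) := by rw [hS.lie_skew Z X, STGAux.nnr hS, STGAux.gnl hS]
      have h134 : S.g (S.lie (S.lie X W) Z) Y = -(S.g (S.lie (S.lie W X) Z) Y) := by rw [hS.lie_skew X W, STGAux.lieNl hS, STGAux.gnl hS]
      have h135 : S.g (S.nab (S.lie Z X) Y) W = -(S.g (S.nab (S.lie X Z) Y) W) := by rw [hS.lie_skew Z X, STGAux.nnl hS, STGAux.gnl hS]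
      have h136 : S.g (S.lie W Y) (S.nab Z X) = -(S.g (S.lie Y W) (S.nab Z X)) := by rw [hS.lie_skew W Y, STGAux.gnl hS]
      have h137 : S.g (S.lie X Y) (S.lie W Z) = -(S.g (S.lie Y X) (S.lie W Z)) := by rw [hS.lie_skew X Y, STGAux.gnl hS]
      have h138 : S.g W (S.lie (S.lie X Z) Y) = -(S.g W (S.lie Y (S.lie X Z))) := by rw [hS.lie_skew (S.lie X Z) Y, STGAux.gnr hS]
      have h139 : S.g W (S.lie (S.lie X Z) Y) = -(S.g W (S.lie (S.lie Z X) Y)) := by rw [hS.lie_skew X Z, STGAux.lieNl hS, STGAux.gnr hS]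
      have h140 : S.g (S.nab Y (S.lie Z W)) X = -(S.g (S.nab Y (S.lie W Z)) X) := by rw [hS.lie_skew Z W, STGAux.nnr hS, STGAux.gnl hS]
      have h141 : S.g (S.lie Z X) (S.nab W Y) = -(S.g (S.lie X Z) (S.nab W Y)) := by rw [hS.lie_skew Z X, STGAux.gnl hS]
      have h142 : S.g Z (S.lie (S.lie Y X) W) = -(S.g Z (S.lie (S.lie X Y) W)) := by rw [hS.lie_skew Y X, STGAux.lieNl hS, STGAux.gnr hS]
      have h143 : S.g (S.lie (S.lie Z Y) X) W = -(S.g (S.lie (S.lie Y Z) X) W) := by rw [hS.lie_skew Z Y, STGAux.lieNl hS, STGAux.gnl hS]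
      have h144 : S.g Y (S.lie (S.lie Z X) W) = -(S.g Y (S.lie W (S.lie Z X))) := by rw [hS.lie_skew (S.lie Z X) W, STGAux.gnr hS]
      have h145 : S.g Y (S.lie (S.lie Z X) W) = -(S.g Y (S.lie (S.lie X Z) W)) := by rw [hS.lie_skew Z X, STGAux.lieNl hS, STGAux.gnr hS]
      have h146 : S.g (S.nab Y (S.lie W X)) Z = -(S.g (S.nab Y (S.lie X W)) Z) := by rw [hS.lie_skew W X, STGAux.nnr hS, STGAux.gnl hS]
      have h147 : S.g (S.lie Y X) (S.nab Z W) = -(S.g (S.lie X Y) (S.nab Z W)) := by rw [hS.lie_skew Y X, STGAux.gnl hS]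
      have h148 : S.g (S.nab Y X) (S.lie W Z) = -(S.g (S.nab Y X) (S.lie Z W)) := by rw [hS.lie_skew W Z, STGAux.gnr hS]
      have h149 : S.g (S.nab X (S.lie Y Z)) W = -(S.g (S.nab X (S.lie Z Y)) W) := by rw [hS.lie_skew Y Z, STGAux.nnr hS, STGAux.gnl hS]
      have h150 : S.g (S.lie Z Y) (S.lie W X) = -(S.g (S.lie Y Z) (S.lie W X)) := by rw [hS.lie_skew Z Y, STGAux.gnl hS]
      have h151 : S.g Z (S.lie Y (S.lie W X)) = -(S.g Z (S.lie Y (S.lie X W))) := by rw [hS.lie_skew W X, STGAux.lieNr hS, STGAux.gnr hS]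
      have h152 : S.g X (S.lie Z (S.lie Y W)) = -(S.g X (S.lie (S.lie Y W) Z)) := by rw [hS.lie_skew Z (S.lie Y W), STGAux.gnr hS]
      have h153 : S.g Z (S.lie (S.lie X Y) W) = -(S.g Z (S.lie W (S.lie X Y))) := by rw [hS.lie_skew (S.lie X Y) W, STGAux.gnr hS]
      have h154 : S.g (S.lie (S.lie Z X) Y) W = -(S.g (S.lie Y (S.lie Z X)) W) := by rw [hS.lie_skew (S.lie Z X) Y, STGAux.gnl hS]
      have h155 : S.g (S.nab W (S.lie Y X)) Z = -(S.g (S.nab W (S.lie X Y)) Z) := by rw [hS.lie_skew Y X, STGAux.nnr hS, STGAux.gnl hS]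
      linear_combination
        - 5 * h0
        - h1
        + h2
        - 4 * h3
        - 3 * h4
        - 3 * h5
        + 2 * h6
        - 3 * h7
        + 2 * h8
        - 2 * h9
        + h10
        + 2 * h11
        - h12
        + 2 * h13
        + h14
        + h15
        + h16
        - 3 * h17
        - 3 * h18
        + h19
        - 2 * h20
        + 2 * h21
        + h22
        + 2 * h23
        + 3 * h24
        + h25
        + 2 * h26
        - 5 * h27
        - 3 * h28
        - 4 * h29
        + 5 * h30
        + 3 * h31
        + 4 * h32
        - 2 * h33
        - h34
        - 4 * h35
        - 3 * h36
        - 3 * h37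
        + 2 * h38
        - 2 * h39
        + h40
        + h41
        - 4 * h42
        + h43
        + h44
        - 3 * h45
        - h46
        - 3 * h47
        + 2 * h48
        - 2 * h49
        + h50
        - h51
        - 2 * h52
        - 5 * h53
        - 3 * h54
        + h55
        + h56
        + h57
        + 2 * h58
        + h59
        + h60
        - h61
        + 3 * h62
        + h63
        - 2 * h64
        - 2 * h65
        - 2 * h66
        - 4 * h67
        - 3 * h68
        + h69
        + 4 * h70
        + 4 * h71
        + 3 * h72
        + h73
        + 3 * h74
        + 7 * h75
        + 6 * h76
        - 2 * h77
        + 2 * h78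
        - h79
        - h80
        + h81
        - 5 * h82
        - h83
        - h84
        - h85
        - 2 * h86
        + h87
        - 4 * h88
        - 3 * h89
        + h90
        + 4 * h91
        + 4 * h92
        - 2 * h93
        - h94
        - h95
        - h96
        - h97
        - h98
        + 2 * h99
        - h100
        - h101
        + h102
        - h103
        + 6 * h104
        - 3 * h105
        + 2 * h106
        - h107
        - 3 * h108
        - h109
        - h110
        + 2 * h111
        - h112
        + h113
        + 2 * h114
        + 3 * h115
        - 4 * h116
        + 6 * h117
        + 4 * h118
        + h119
        - h120
        - h121
        + 2 * h122
        + 2 * h123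
        - 4 * h124
        + h125
        - h126
        - h127
        + 2 * h128
        - 4 * h129
        + 4 * h130
        + h131
        + h132
        - h133
        - 5 * h134
        - 3 * h135
        + 2 * h136
        + h137
        - 4 * h138
        + 7 * h139
        - 3 * h140
        - 6 * h141
        - h142
        + 5 * h143
        + 2 * h144
        - h145
        - 4 * h146
        + 3 * h147
        - 2 * h148
        + h149
        + h150
        - 3 * h151
        + h152
        - h153
        - h154
        - 3 * h155
    have keyhalf : (1/2 : ℝ) • S.dT X Y Z W =
        S.nabT W X Y Z - (S.R W X Y Z + S.R W Y Z X + S.R W Z X Y) := by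
      rw [key, ← two_smul ℝ, smul_smul]
      norm_num
    rw [keyhalf]
    ring
end
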